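/- arXiv:1601.04546 — 6 statements merged into one kernel-verified Lean document; each statement's English description precedes it below -/
import Mathlib

section
/- For all real a, b, x: ∫_{−∞}^{x} Φ(au + b) φ(u) du = Φ_ρ(b/√(a²+1), x) with ρ = −a/√(a²+1), where φ is the standard normal density and Φ_ρ is the bivariate standard normal CDF with correlation ρ. -/
open MeasureTheory ProbabilityTheory Real Set

/-- Standard normal cumulative distribution function. -/
noncomputable def Phi (x : ℝ) : ℝ := ((gaussianReal 0 1) (Set.Iic x)).toReal

/-- Generalized inverse (quantile function) of the standard normal CDF. -/
noncomputable def PhiInv (u : ℝ) : ℝ := sInf {x : ℝ | u ≤ Phi x}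

/-- Standard normal density. -/
noncomputable def phiDens (u : ℝ) : ℝ := Real.exp (-u ^ 2 / 2) / Real.sqrt (2 * Real.pi)

/-- Law of a bivariate standard Gaussian vector with correlation ρ. -/
noncomputable def stdGauss2 (ρ : ℝ) : Measure (ℝ × ℝ) :=
  ((gaussianReal 0 1).prod (gaussianReal 0 1)).map
    (fun p => (p.1, ρ * p.1 + Real.sqrt (1 - ρ ^ 2) * p.2))

/-- Bivariate standard normal CDF with correlation ρ. -/
noncomputable def Phi2 (ρ x y : ℝ) : ℝ := ((stdGauss2 ρ) (Set.Iic x ×ˢ Set.Iic y)).toReal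

/-- `B` is a standard Brownian motion (started at `0`) under `P`. -/
structure IsStandardBM {Ω : Type} [MeasurableSpace Ω] (P : Measure Ω) (B : ℝ → Ω → ℝ) : Prop where
  meas : ∀ t : ℝ, Measurable (B t)
  cont : ∀ ω, Continuous fun t => B t ω
  init : ∀ ω, B 0 ω = 0
  gauss : ∀ s t : ℝ, 0 ≤ s → ∀ hst : s ≤ t,
    P.map (fun ω => B t ω - B s ω) = gaussianReal 0 ⟨t - s, sub_nonneg.mpr hst⟩
  indep : ∀ (n : ℕ) (ts : Fin (n + 1) → ℝ), Monotone ts → (∀ i, 0 ≤ ts i) →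
    iIndepFun
      (fun i : Fin n => fun ω => B (ts i.succ) ω - B (ts i.castSucc) ω) P

/-- `C` is a (bivariate) copula. -/
def IsCopula (C : ℝ → ℝ → ℝ) : Prop :=
  (∀ u₁ u₂ v₁ v₂ : ℝ, 0 ≤ u₁ → u₁ ≤ u₂ → u₂ ≤ 1 → 0 ≤ v₁ → v₁ ≤ v₂ → v₂ ≤ 1 →
    0 ≤ C u₂ v₂ - C u₁ v₂ - C u₂ v₁ + C u₁ v₁) ∧
  (∀ u : ℝ, 0 ≤ u → u ≤ 1 → C u 0 = 0 ∧ C 0 u = 0 ∧ C u 1 = u ∧ C 1 u = u)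


open scoped ENNReal

lemma Phi_mono : Monotone Phi := fun s t h =>
  ENNReal.toReal_mono (measure_ne_top _ _) (measure_mono (Set.Iic_subset_Iic.mpr h))

lemma Phi_nonneg (t : ℝ) : 0 ≤ Phi t := ENNReal.toReal_nonneg

lemma ofReal_Phi (t : ℝ) : ENNReal.ofReal (Phi t) = (gaussianReal 0 1) (Set.Iic t) :=
  ENNReal.ofReal_toReal (measure_ne_top _ _)

lemma gaussianPDFReal_eq (u : ℝ) : gaussianPDFReal 0 1 u = phiDens u := by
  simp [gaussianPDFReal, phiDens, div_eq_inv_mul]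

lemma phiDens_nonneg (u : ℝ) : 0 ≤ phiDens u := by unfold phiDens; positivity

lemma measurable_phiDens : Measurable phiDens := by unfold phiDens; fun_prop

lemma prodG :
    (gaussianReal 0 1).prod (gaussianReal 0 1)
      = (volume : Measure (ℝ × ℝ)).withDensity
          (fun p => gaussianPDF 0 1 p.1 * gaussianPDF 0 1 p.2) := by
  refine Measure.prod_eq fun s t hs ht => ?_
  rw [withDensity_apply _ (hs.prod ht), Measure.volume_eq_prod, ← Measure.prod_restrict,
    lintegral_prod_mul (measurable_gaussianPDF 0 1).aemeasurable
      (measurable_gaussianPDF 0 1).aemeasurable,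
    ← gaussianReal_apply 0 one_ne_zero s, ← gaussianReal_apply 0 one_ne_zero t]

section
variable (a b x : ℝ)

noncomputable def cc : ℝ := Real.sqrt (a ^ 2 + 1)
lemma cc_pos : 0 < cc a := Real.sqrt_pos.mpr (by positivity)
lemma cc_sq : (cc a) ^ 2 = a ^ 2 + 1 := Real.sq_sqrt (by positivity)
lemma cc_ne : cc a ≠ 0 := (cc_pos a).ne'

noncomputable def LL : (ℝ × ℝ) →ₗ[ℝ] (ℝ × ℝ) :=
  Matrix.toLin (Module.Basis.finTwoProd ℝ) (Module.Basis.finTwoProd ℝ)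
    !![-a / cc a, 1 / cc a; 1 / cc a, a / cc a]

lemma LL_apply (p : ℝ × ℝ) :
    LL a p = ((p.2 - a * p.1) / cc a, (p.1 + a * p.2) / cc a) := by
  rw [LL, Matrix.toLin_finTwoProd_apply, Prod.ext_iff]
  constructor <;> (simp only; ring)

lemma LL_det : LinearMap.det (LL a) = -1 := by
  have hc := cc_sq a
  have hne := cc_ne a
  rw [LL, LinearMap.det_toLin, Matrix.det_fin_two_of]
  field_simp
  nlinarith [hc]

lemma LL_norm (p : ℝ × ℝ) : (LL a p).1 ^ 2 + (LL a p).2 ^ 2 = p.1 ^ 2 + p.2 ^ 2 := by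
  have hc := cc_sq a
  have hne := cc_ne a
  rw [LL_apply]
  field_simp
  linear_combination -(p.1 ^ 2 + p.2 ^ 2) * hc

lemma LL_measurable : Measurable (LL a) :=
  (LinearMap.continuous_of_finiteDimensional (LL a)).measurable

lemma volume_map_LL : Measure.map (LL a) (volume : Measure (ℝ × ℝ)) = volume := by
  rw [Measure.map_linearMap_addHaar_eq_smul_addHaar _ (by rw [LL_det]; norm_num)]
  rw [LL_det]
  norm_num

def S1 : Set (ℝ × ℝ) := {p | p.1 ≤ x ∧ p.2 ≤ a * p.1 + b}
def S2 : Set (ℝ × ℝ) := {p | p.1 ≤ b / cc a ∧ p.2 ≤ cc a * x + a * p.1}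

lemma S1_meas : MeasurableSet (S1 a b x) :=
  (measurableSet_le measurable_fst measurable_const).inter
    (measurableSet_le measurable_snd (by fun_prop))

lemma S2_meas : MeasurableSet (S2 a b x) :=
  (measurableSet_le measurable_fst measurable_const).inter
    (measurableSet_le measurable_snd (by fun_prop))

lemma mem_S1_iff (p : ℝ × ℝ) : p ∈ S1 a b x ↔ LL a p ∈ S2 a b x := by
  have hc := cc_pos a
  have hc2 := cc_sq a
  simp only [S1, S2, mem_setOf_eq, LL_apply]
  rw [div_le_div_iff_of_pos_right hc,
    show cc a * x + a * ((p.2 - a * p.1) / cc a)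
        = (cc a ^ 2 * x + a * (p.2 - a * p.1)) / cc a by field_simp,
    div_le_div_iff_of_pos_right hc, cc_sq]
  constructor <;> rintro ⟨h1, h2⟩ <;> constructor <;> nlinarith [sq_nonneg a]

/-- The 2D standard Gaussian density. -/
noncomputable def GG (p : ℝ × ℝ) : ℝ≥0∞ := gaussianPDF 0 1 p.1 * gaussianPDF 0 1 p.2

lemma GG_meas : Measurable GG :=
  ((measurable_gaussianPDF 0 1).comp measurable_fst).mul
    ((measurable_gaussianPDF 0 1).comp measurable_snd)

lemma GG_val (p : ℝ × ℝ) :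
    GG p = ENNReal.ofReal
      ((Real.sqrt (2 * π))⁻¹ ^ 2 * Real.exp (-(p.1 ^ 2 + p.2 ^ 2) / 2)) := by
  rw [GG, gaussianPDF, gaussianPDF, ← ENNReal.ofReal_mul (gaussianPDFReal_nonneg _ _ _)]
  congr 1
  simp only [gaussianPDFReal, NNReal.coe_one, mul_one, sub_zero]
  rw [show -(p.1 ^ 2 + p.2 ^ 2) / 2 = -p.1 ^ 2 / 2 + -p.2 ^ 2 / 2 by ring, Real.exp_add]
  ring

lemma GG_LL (p : ℝ × ℝ) : GG (LL a p) = GG p := by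
  rw [GG_val, GG_val, LL_norm]

lemma measure_S1_eq_S2 :
    ((gaussianReal 0 1).prod (gaussianReal 0 1)) (S1 a b x)
      = ((gaussianReal 0 1).prod (gaussianReal 0 1)) (S2 a b x) := by
  rw [prodG, withDensity_apply _ (S1_meas a b x), withDensity_apply _ (S2_meas a b x),
    ← lintegral_indicator (S1_meas a b x), ← lintegral_indicator (S2_meas a b x)]
  calc ∫⁻ p, (S1 a b x).indicator GG p
      = ∫⁻ p, (S2 a b x).indicator GG (LL a p) := by
        refine lintegral_congr fun p => ?_
        by_cases hp : p ∈ S1 a b x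
        · rw [indicator_of_mem hp, indicator_of_mem ((mem_S1_iff a b x p).mp hp), GG_LL]
        · rw [indicator_of_notMem hp,
            indicator_of_notMem (fun h => hp ((mem_S1_iff a b x p).mpr h))]
    _ = ∫⁻ q, (S2 a b x).indicator GG q ∂(Measure.map (LL a) volume) :=
        (lintegral_map (GG_meas.indicator (S2_meas a b x)) (LL_measurable a)).symm
    _ = ∫⁻ q, (S2 a b x).indicator GG q := by rw [volume_map_LL]

lemma stepA :
    ∫ u in Set.Iic x, Phi (a * u + b) * phiDens u
      = (((gaussianReal 0 1).prod (gaussianReal 0 1)) (S1 a b x)).toReal := by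
  have hPhiM : Measurable fun u => Phi (a * u + b) :=
    Phi_mono.measurable.comp (by fun_prop)
  have h1 : ((gaussianReal 0 1).prod (gaussianReal 0 1)) (S1 a b x)
      = ∫⁻ u in Set.Iic x, (gaussianReal 0 1) (Set.Iic (a * u + b)) ∂(gaussianReal 0 1) := by
    rw [Measure.prod_apply (S1_meas a b x), ← lintegral_indicator measurableSet_Iic]
    refine lintegral_congr fun u => ?_
    by_cases hu : u ≤ x
    · rw [Set.indicator_of_mem (show u ∈ Set.Iic x from hu)]
      congr 1
      ext v
      simp [S1, hu]
    · rw [Set.indicator_of_notMem (show u ∉ Set.Iic x from hu),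
        show Prod.mk u ⁻¹' (S1 a b x) = ∅ by ext v; simp [S1, hu]]
      simp
  have h2 : ((gaussianReal 0 1).prod (gaussianReal 0 1)) (S1 a b x)
      = ∫⁻ u in Set.Iic x, ENNReal.ofReal (Phi (a * u + b) * phiDens u) := by
    rw [h1]
    simp_rw [← ofReal_Phi]
    rw [gaussianReal_of_var_ne_zero 0 one_ne_zero, restrict_withDensity measurableSet_Iic,
      lintegral_withDensity_eq_lintegral_mul _ (measurable_gaussianPDF 0 1)
        hPhiM.ennreal_ofReal]
    refine lintegral_congr fun u => ?_
    simp only [Pi.mul_apply]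
    rw [gaussianPDF, ENNReal.ofReal_mul (Phi_nonneg _),
      ← ENNReal.ofReal_mul (gaussianPDFReal_nonneg _ _ _), gaussianPDFReal_eq,
      mul_comm (phiDens u)]
    rw [ENNReal.ofReal_mul (Phi_nonneg _)]
  rw [integral_eq_lintegral_of_nonneg_ae
      (ae_of_all _ fun u => mul_nonneg (Phi_nonneg _) (phiDens_nonneg u))
      (hPhiM.mul measurable_phiDens).aestronglyMeasurable, ← h2]

lemma stepB :
    Phi2 (-a / cc a) (b / cc a) x
      = (((gaussianReal 0 1).prod (gaussianReal 0 1)) (S2 a b x)).toReal := by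
  have hc := cc_pos a
  have hc2 := cc_sq a
  have hsq : Real.sqrt (1 - (-a / cc a) ^ 2) = 1 / cc a := by
    rw [show (1 : ℝ) - (-a / cc a) ^ 2 = 1 / (a ^ 2 + 1) by
      rw [div_pow, neg_pow, cc_sq]; field_simp; ring]
    rw [one_div, one_div, Real.sqrt_inv, cc]
  rw [Phi2, stdGauss2, Measure.map_apply (by fun_prop) (measurableSet_Iic.prod measurableSet_Iic)]
  congr 2
  ext p
  simp only [mem_preimage, mem_prod, mem_Iic, S2, mem_setOf_eq, hsq]
  constructor <;> rintro ⟨h1, h2⟩ <;> refine ⟨h1, ?_⟩ <;>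
    rw [show -a / cc a * p.1 + 1 / cc a * p.2 = (p.2 - a * p.1) / cc a by ring] at * <;>
    rw [div_le_iff₀ hc] at * <;> nlinarith [sq_nonneg a]

end

/-- Gaussian integral of a shifted normal CDF as a bivariate normal CDF. -/
theorem stmt3 (a b x : ℝ) :
    ∫ u in Set.Iic x, Phi (a * u + b) * phiDens u
      = Phi2 (-a / Real.sqrt (a ^ 2 + 1)) (b / Real.sqrt (a ^ 2 + 1)) x := by
  have h : Phi2 (-a / Real.sqrt (a ^ 2 + 1)) (b / Real.sqrt (a ^ 2 + 1)) x
      = Phi2 (-a / cc a) (b / cc a) x := rfl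
  rw [stepA a b x, h, stepB a b x, measure_S1_eq_S2 a b x]
end

section
/- For ρ > 0 and all real x, y: Φ_{√(1−ρ²)}(x, y) = Φ(y)·Φ((x − √(1−ρ²)·y)/ρ) + Φ(x) − Φ_ρ(x, (x − √(1−ρ²)·y)/ρ). -/
open MeasureTheory ProbabilityTheory Real Set

noncomputable def gam : Measure ℝ := gaussianReal 0 1

instance : IsProbabilityMeasure gam := by
  unfold gam; infer_instance

instance : SigmaFinite gam := by
  unfold gam; infer_instance

noncomputable def gdens : ℝ × ℝ → ENNReal :=
  fun p => gaussianPDF 0 1 p.1 * gaussianPDF 0 1 p.2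

lemma gdens_meas : Measurable gdens :=
  ((measurable_gaussianPDF 0 1).comp measurable_fst).mul
    ((measurable_gaussianPDF 0 1).comp measurable_snd)

lemma gam_prod_eq : gam.prod gam = (volume.prod volume).withDensity gdens := by
  refine Measure.prod_eq fun s t hs ht => ?_
  rw [withDensity_apply _ (hs.prod ht), ← Measure.prod_restrict]
  simp only [gdens]
  rw [
    lintegral_prod_mul (measurable_gaussianPDF 0 1).aemeasurable
      (measurable_gaussianPDF 0 1).aemeasurable]
  rw [show gam = gaussianReal 0 1 from rfl, gaussianReal_apply 0 one_ne_zero s,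
    gaussianReal_apply 0 one_ne_zero t]

lemma pdf_prod_eq (x y : ℝ) : gaussianPDFReal 0 1 x * gaussianPDFReal 0 1 y
    = (Real.sqrt (2*π))⁻¹ * (Real.sqrt (2*π))⁻¹ * Real.exp (-(x^2+y^2)/2) := by
  simp only [gaussianPDFReal, NNReal.coe_one, mul_one, sub_zero]
  rw [mul_mul_mul_comm, ← Real.exp_add]
  congr 1
  ring_nf

lemma map_volume_rot (a b c d : ℝ) (hd : (a*d - b*c)^2 = 1) :
    (volume.prod volume).map (fun p : ℝ × ℝ => (a*p.1 + b*p.2, c*p.1 + d*p.2))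
      = volume.prod volume := by
  have habs : |a*d - b*c| = 1 := by
    have h := sq_abs (a*d - b*c)
    nlinarith [abs_nonneg (a*d - b*c)]
  have h : (fun p : ℝ × ℝ => (a*p.1 + b*p.2, c*p.1 + d*p.2))
      = ⇑(Matrix.toLin (Module.Basis.finTwoProd ℝ) (Module.Basis.finTwoProd ℝ) !![a, b; c, d]) := by
    funext p; simp
  have hdet : LinearMap.det
      (Matrix.toLin (Module.Basis.finTwoProd ℝ) (Module.Basis.finTwoProd ℝ) !![a, b; c, d]) = a*d - b*c := by
    rw [LinearMap.det_toLin, Matrix.det_fin_two_of]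
  rw [h, Measure.map_linearMap_addHaar_eq_smul_addHaar _
    (by rw [hdet]; intro h0; rw [h0] at habs; simp at habs), hdet, abs_inv, habs]
  simp

lemma map_gam_rot (a b c d : ℝ) (h1 : a^2 + c^2 = 1) (h2 : b^2 + d^2 = 1)
    (h3 : a*b + c*d = 0) :
    (gam.prod gam).map (fun p : ℝ × ℝ => (a*p.1 + b*p.2, c*p.1 + d*p.2))
      = gam.prod gam := by
  set T := fun p : ℝ × ℝ => (a*p.1 + b*p.2, c*p.1 + d*p.2) with hT
  have hTm : Measurable T := by fun_prop
  have hdet : (a*d - b*c)^2 = 1 := by nlinarith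
  have hg : ∀ p : ℝ × ℝ, gdens (T p) = gdens p := by
    intro p
    have key : (a*p.1 + b*p.2)^2 + (c*p.1 + d*p.2)^2 = p.1^2 + p.2^2 := by
      linear_combination p.1^2 * h1 + p.2^2 * h2 + 2*p.1*p.2 * h3
    show gaussianPDF 0 1 (a*p.1 + b*p.2) * gaussianPDF 0 1 (c*p.1 + d*p.2)
        = gaussianPDF 0 1 p.1 * gaussianPDF 0 1 p.2
    simp only [gaussianPDF,
      ← ENNReal.ofReal_mul (gaussianPDFReal_nonneg 0 1 _)]
    rw [pdf_prod_eq, pdf_prod_eq, key]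
  ext s hs
  rw [Measure.map_apply hTm hs, gam_prod_eq, withDensity_apply _ (hTm hs),
    withDensity_apply _ hs, ← lintegral_indicator (hTm hs) gdens, ← lintegral_indicator hs gdens]
  have hind : ∀ p, (T ⁻¹' s).indicator gdens p = s.indicator gdens (T p) := by
    intro p
    by_cases hp : p ∈ T ⁻¹' s
    · rw [indicator_of_mem hp, indicator_of_mem (show T p ∈ s from hp), hg]
    · rw [indicator_of_notMem hp, indicator_of_notMem (show T p ∉ s from hp)]
  simp_rw [hind]
  rw [← lintegral_map (gdens_meas.indicator hs) hTm, map_volume_rot a b c d hdet]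

/-- An identity for the bivariate normal CDF. -/
theorem stmt4 (ρ : ℝ) (hρ0 : 0 < ρ) (hρ1 : ρ ≤ 1) (x y : ℝ) :
    Phi2 (Real.sqrt (1 - ρ ^ 2)) x y
      = Phi y * Phi ((x - Real.sqrt (1 - ρ ^ 2) * y) / ρ) + Phi x
        - Phi2 ρ x ((x - Real.sqrt (1 - ρ ^ 2) * y) / ρ) := by
  have hρ2 : (0:ℝ) ≤ 1 - ρ ^ 2 := by nlinarith
  set s : ℝ := Real.sqrt (1 - ρ ^ 2) with hsdef
  have hs0 : 0 ≤ s := Real.sqrt_nonneg _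
  have hs2 : s ^ 2 = 1 - ρ ^ 2 := Real.sq_sqrt hρ2
  have hsum : s ^ 2 + ρ ^ 2 = 1 := by rw [hs2]; ring
  have hsr : Real.sqrt (1 - s ^ 2) = ρ := by
    rw [hs2, sub_sub_cancel, Real.sqrt_sq hρ0.le]
  set w : ℝ := (x - s * y) / ρ with hwdef
  have hw : ρ * w = x - s * y := by
    rw [hwdef, mul_comm]; exact div_mul_cancel₀ _ (ne_of_gt hρ0)
  set μ : Measure (ℝ × ℝ) := gam.prod gam with hμ
  -- the six sets
  set A : Set (ℝ × ℝ) := {p | p.1 ≤ x} ∩ {p | s * p.1 + ρ * p.2 ≤ y} with hA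
  set B : Set (ℝ × ℝ) := {p | p.1 ≤ x} ∩ {p | ρ * p.1 + s * p.2 ≤ w} with hB
  set A' : Set (ℝ × ℝ) := {p | s * p.1 + ρ * p.2 ≤ x} ∩ {p | p.1 ≤ y} with hA'
  set B' : Set (ℝ × ℝ) := {p | s * p.1 + ρ * p.2 ≤ x} ∩ {p | p.2 ≤ w} with hB'
  set E : Set (ℝ × ℝ) := {p | s * p.1 + ρ * p.2 ≤ x} with hE
  have mhalf1 : MeasurableSet {p : ℝ × ℝ | p.1 ≤ x} :=
    measurableSet_le measurable_fst measurable_const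
  have mhalf2 : ∀ z : ℝ, MeasurableSet {p : ℝ × ℝ | s * p.1 + ρ * p.2 ≤ z} := fun z =>
    measurableSet_le (by fun_prop) measurable_const
  have mhalf3 : ∀ z : ℝ, MeasurableSet {p : ℝ × ℝ | ρ * p.1 + s * p.2 ≤ z} := fun z =>
    measurableSet_le (by fun_prop) measurable_const
  have mA : MeasurableSet A := mhalf1.inter (mhalf2 y)
  have mB : MeasurableSet B := mhalf1.inter (mhalf3 w)
  have mA' : MeasurableSet A' := (mhalf2 x).inter (measurableSet_le measurable_fst measurable_const)
  have mB' : MeasurableSet B' := (mhalf2 x).inter (measurableSet_le measurable_snd measurable_const)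
  -- Phi2 s x y = μ A
  have hPhi2s : (stdGauss2 s) (Iic x ×ˢ Iic y) = μ A := by
    rw [stdGauss2, Measure.map_apply (by fun_prop) (measurableSet_Iic.prod measurableSet_Iic)]
    congr 1
    ext p
    simp only [mem_preimage, mem_prod, mem_Iic, hA, mem_inter_iff, mem_setOf_eq, hsr]
  have hPhi2r : (stdGauss2 ρ) (Iic x ×ˢ Iic w) = μ B := by
    rw [stdGauss2, Measure.map_apply (by fun_prop) (measurableSet_Iic.prod measurableSet_Iic)]
    rw [show Real.sqrt (1 - ρ ^ 2) = s from hsdef.symm]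
    congr 1
  -- transfer A to A' by rotation T₁ = (s, ρ; ρ, -s)
  have hAA' : μ A = μ A' := by
    have hmap := map_gam_rot s ρ ρ (-s) (by linarith) (by nlinarith) (by ring)
    rw [hμ]
    conv_lhs => rw [← hmap]
    rw [Measure.map_apply (by fun_prop) mA]
    congr 1
    ext p
    have hlin : s * (s * p.1 + ρ * p.2) + ρ * (ρ * p.1 + -s * p.2) = p.1 := by
      linear_combination p.1 * hsum
    simp only [hA, hA', hE, mem_preimage, mem_inter_iff, mem_setOf_eq, hlin]
  have hBB' : μ B = μ B' := by
    have hmap := map_gam_rot s ρ (-ρ) s (by nlinarith) (by nlinarith) (by ring)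
    rw [hμ]
    conv_lhs => rw [← hmap]
    rw [Measure.map_apply (by fun_prop) mB]
    congr 1
    ext p
    have hlin : ρ * (s * p.1 + ρ * p.2) + s * (-ρ * p.1 + s * p.2) = p.2 := by
      linear_combination p.2 * hsum
    simp only [hB, hB', hE, mem_preimage, mem_inter_iff, mem_setOf_eq, hlin]
  have hDE : μ {p : ℝ × ℝ | p.1 ≤ x} = μ E := by
    have hmap := map_gam_rot s ρ ρ (-s) (by linarith) (by nlinarith) (by ring)
    rw [hμ]
    conv_lhs => rw [← hmap]
    rw [Measure.map_apply (by fun_prop) mhalf1]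
    rfl
  -- the union/inter identities
  have hU : A' ∪ B' = E := by
    ext p
    simp only [hA', hB', hE, mem_union, mem_inter_iff, mem_setOf_eq]
    constructor
    · rintro (⟨h, _⟩ | ⟨h, _⟩) <;> exact h
    · intro h
      by_cases hy : p.1 ≤ y
      · exact Or.inl ⟨h, hy⟩
      · refine Or.inr ⟨h, ?_⟩
        push_neg at hy
        nlinarith
  have hI : A' ∩ B' = Iic y ×ˢ Iic w := by
    ext p
    simp only [hA', hB', hE, mem_inter_iff, mem_setOf_eq, mem_prod, mem_Iic]
    constructor
    · rintro ⟨⟨_, h1⟩, ⟨_, h2⟩⟩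
      exact ⟨h1, h2⟩
    · rintro ⟨h1, h2⟩
      exact ⟨⟨by nlinarith, h1⟩, ⟨by nlinarith, h2⟩⟩
  -- key measure identity
  have key : μ A + μ B = μ (Iic y ×ˢ Iic w) + μ {p : ℝ × ℝ | p.1 ≤ x} := by
    rw [hAA', hBB', hDE, ← measure_union_add_inter A' mB', hU, hI, add_comm]
  -- marginals
  have hC : μ (Iic y ×ˢ Iic w) = gam (Iic y) * gam (Iic w) := Measure.prod_prod _ _
  have hD : μ {p : ℝ × ℝ | p.1 ≤ x} = gam (Iic x) := by
    have : {p : ℝ × ℝ | p.1 ≤ x} = Iic x ×ˢ (univ : Set ℝ) := by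
      ext p; simp [mem_prod]
    rw [this, Measure.prod_prod, measure_univ, mul_one]
  rw [hC, hD] at key
  -- convert to reals
  have fA : μ A ≠ ⊤ := measure_ne_top _ _
  have fB : μ B ≠ ⊤ := measure_ne_top _ _
  have fy : gam (Iic y) ≠ ⊤ := measure_ne_top _ _
  have fw : gam (Iic w) ≠ ⊤ := measure_ne_top _ _
  have fx : gam (Iic x) ≠ ⊤ := measure_ne_top _ _
  have key' := congrArg ENNReal.toReal key
  rw [ENNReal.toReal_add fA fB, ENNReal.toReal_add (ENNReal.mul_ne_top fy fw) fx,
    ENNReal.toReal_mul] at key'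
  have e1 : Phi2 s x y = (μ A).toReal := by rw [Phi2, hPhi2s]
  have e2 : Phi2 ρ x w = (μ B).toReal := by rw [Phi2, hPhi2r]
  have e3 : Phi y = (gam (Iic y)).toReal := rfl
  have e4 : Phi w = (gam (Iic w)).toReal := rfl
  have e5 : Phi x = (gam (Iic x)).toReal := rfl
  rw [e1, e2, e3, e4, e5]
  linarith
end

section
/- Let X and Y be real-valued random variables on a common probability space with continuous marginal distribution functions F^X = F^Y and whose copula C satisfies C(u,v) = C(v,u) for all u,v ∈ [0,1]. Then for every real x, P(X − Y ≤ −x) = P(X − Y ≥ x). -/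
open MeasureTheory ProbabilityTheory Real Set

/-- If two random variables have the same continuous marginal distribution and a symmetric
copula, the distribution of their difference is symmetric. -/
theorem stmt8 {Ω : Type} [MeasurableSpace Ω] (P : Measure Ω) [IsProbabilityMeasure P]
    (X Y : Ω → ℝ) (hX : Measurable X) (hY : Measurable Y)
    (F : ℝ → ℝ) (hF : Continuous F)
    (hFX : ∀ x, (P {ω | X ω ≤ x}).toReal = F x)
    (hFY : ∀ x, (P {ω | Y ω ≤ x}).toReal = F x)
    (C : ℝ → ℝ → ℝ) (hC : IsCopula C)
    (hjoint : ∀ x y, (P {ω | X ω ≤ x ∧ Y ω ≤ y}).toReal = C (F x) (F y))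
    (hsym : ∀ u v, u ∈ Set.Icc (0:ℝ) 1 → v ∈ Set.Icc (0:ℝ) 1 → C u v = C v u)
    (x : ℝ) :
    P {ω | X ω - Y ω ≤ -x} = P {ω | x ≤ X ω - Y ω} := by
  have hFmem : ∀ a, F a ∈ Set.Icc (0:ℝ) 1 := by
    intro a
    rw [← hFX a]
    exact ⟨ENNReal.toReal_nonneg, ENNReal.toReal_le_of_le_ofReal zero_le_one
      (by simpa using prob_le_one)⟩
  -- joint laws of (X,Y) and (Y,X) agree
  have hXY : Measurable fun ω => (X ω, Y ω) := hX.prodMk hY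
  have hYX : Measurable fun ω => (Y ω, X ω) := hY.prodMk hX
  have hspan : IsCountablySpanning (range (Iic : ℝ → Set ℝ)) := by
    refine ⟨fun n => Iic (n : ℝ), fun n => mem_range_self _, ?_⟩
    ext y; simp only [mem_iUnion, mem_Iic, mem_univ, iff_true]
    obtain ⟨n, hn⟩ := exists_nat_ge y; exact ⟨n, hn⟩
  have hgen : MeasurableSpace.generateFrom
      (image2 (· ×ˢ ·) (range (Iic : ℝ → Set ℝ)) (range (Iic : ℝ → Set ℝ)))
      = Prod.instMeasurableSpace := by
    refine generateFrom_eq_prod ?_ ?_ hspan hspan <;>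
      rw [← borel_eq_generateFrom_Iic ℝ] <;> exact (BorelSpace.measurable_eq).symm
  have hmaps : P.map (fun ω => (X ω, Y ω)) = P.map (fun ω => (Y ω, X ω)) := by
    refine MeasureTheory.ext_of_generate_finite _ hgen.symm
      (isPiSystem_Iic.prod isPiSystem_Iic) ?_ ?_
    · rintro _ ⟨_, ⟨a, rfl⟩, _, ⟨b, rfl⟩, rfl⟩
      rw [Measure.map_apply hXY (measurableSet_Iic.prod measurableSet_Iic),
        Measure.map_apply hYX (measurableSet_Iic.prod measurableSet_Iic)]
      have h1 : (fun ω => (X ω, Y ω)) ⁻¹' (Iic a ×ˢ Iic b) = {ω | X ω ≤ a ∧ Y ω ≤ b} := by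
        ext ω; simp [Set.mem_prod]
      have h2 : (fun ω => (Y ω, X ω)) ⁻¹' (Iic a ×ˢ Iic b) = {ω | X ω ≤ b ∧ Y ω ≤ a} := by
        ext ω; simp [Set.mem_prod, and_comm]
      rw [h1, h2]
      refine (ENNReal.toReal_eq_toReal_iff' (measure_ne_top _ _) (measure_ne_top _ _)).mp ?_
      rw [hjoint a b, hjoint b a, hsym (F a) (F b) (hFmem a) (hFmem b)]
    · rw [Measure.map_apply hXY MeasurableSet.univ, Measure.map_apply hYX MeasurableSet.univ]
      simp
  have hs : MeasurableSet {p : ℝ × ℝ | p.1 - p.2 ≤ -x} :=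
    measurableSet_le (measurable_fst.sub measurable_snd) measurable_const
  have e1 : P {ω | X ω - Y ω ≤ -x} = P.map (fun ω => (X ω, Y ω)) {p : ℝ × ℝ | p.1 - p.2 ≤ -x} := by
    rw [Measure.map_apply hXY hs]; rfl
  have e2 : P.map (fun ω => (Y ω, X ω)) {p : ℝ × ℝ | p.1 - p.2 ≤ -x} = P {ω | x ≤ X ω - Y ω} := by
    rw [Measure.map_apply hYX hs]
    congr 1; ext ω; simp only [mem_preimage, mem_setOf_eq]; constructor <;> intro h <;> linarith
  rw [e1, hmaps, e2]
end

section
/- The function C^r defined with parameter r ∈ (0,1) by C^r(u,v) = min(u−1+r, v) for (u,v) ∈ [1−r,1]×[0,r], and C^r(u,v) = max(u+v−1, 0) otherwise, is a copula. -/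
open MeasureTheory ProbabilityTheory Real Set

lemma supermod_max0 (a1 a2 b1 b2 : ℝ) (ha : a1 ≤ a2) (hb : b2 ≤ b1) :
    0 ≤ max 0 (a2 - b2) - max 0 (a1 - b2) - max 0 (a2 - b1) + max 0 (a1 - b1) := by
  simp only [max_def]
  split_ifs <;> linarith

lemma supermod_min (s1 s2 t1 t2 : ℝ) (hs : s1 ≤ s2) (ht : t1 ≤ t2) :
    0 ≤ min s2 t2 - min s1 t2 - min s2 t1 + min s1 t1 := by
  simp only [min_def]
  split_ifs <;> linarith

/-- The patchwork (shuffle-of-M) copula `C^r`. -/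
noncomputable def Cr (r u v : ℝ) : ℝ :=
  if 1 - r ≤ u ∧ v ≤ r then min (u - 1 + r) v else max (u + v - 1) 0


lemma Cr_eq (r u v : ℝ) (hr0 : 0 < r) (hr1 : r < 1) (hu0 : 0 ≤ u) (hu1 : u ≤ 1)
    (hv0 : 0 ≤ v) (hv1 : v ≤ 1) :
    Cr r u v = max 0 (min u (1 - r) - max 0 (1 - v)) + min (max 0 (u - 1 + r)) v := by
  unfold Cr
  by_cases h1 : 1 - r ≤ u <;> by_cases h2 : v ≤ r
  · rw [if_pos ⟨h1, h2⟩]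
    simp only [min_def, max_def]; split_ifs <;> first | rfl | linarith
  all_goals
    rw [if_neg (by tauto)]
    try push_neg at h1
  all_goals try push_neg at h2
  all_goals simp only [min_def, max_def]; split_ifs <;> first | rfl | linarith

/-- For every `r ∈ (0,1)`, the patchwork function `C^r` is a copula. -/
theorem stmt12 (r : ℝ) (hr0 : 0 < r) (hr1 : r < 1) : IsCopula (Cr r) := by
  constructor
  · intro u1 u2 v1 v2 hu1 hu12 hu2 hv1 hv12 hv2
    rw [Cr_eq r u2 v2 hr0 hr1 (le_trans hu1 hu12) hu2 (le_trans hv1 hv12) hv2,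
        Cr_eq r u1 v2 hr0 hr1 hu1 (le_trans hu12 hu2) (le_trans hv1 hv12) hv2,
        Cr_eq r u2 v1 hr0 hr1 (le_trans hu1 hu12) hu2 hv1 (le_trans hv12 hv2),
        Cr_eq r u1 v1 hr0 hr1 hu1 (le_trans hu12 hu2) hv1 (le_trans hv12 hv2)]
    have hG := supermod_max0 (min u1 (1 - r)) (min u2 (1 - r))
      (max 0 (1 - v1)) (max 0 (1 - v2))
      (min_le_min hu12 le_rfl) (max_le_max le_rfl (by linarith))
    have hH := supermod_min (max 0 (u1 - 1 + r)) (max 0 (u2 - 1 + r)) v1 v2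
      (max_le_max le_rfl (by linarith)) hv12
    linarith
  · intro u hu0 hu1
    unfold Cr
    refine ⟨?_, ?_, ?_, ?_⟩ <;>
      · simp only [min_def, max_def]
        split_ifs <;> first | rfl | linarith | (exfalso; push_neg at *; linarith)
end

section
/- For η > 0 and t > 0, the range of C ↦ P_C(B¹_t − B²_t ≥ η) over all copulae C of two standard normal random variables with variance t is exactly the interval [0, 2Φ(−η/(2√t))]. -/
open MeasureTheory ProbabilityTheory Real Set

open Filter
open scoped NNReal ENNReal Topology

namespace PhiLemmas

noncomputable def pdf : ℝ → ℝ := gaussianPDFReal 0 1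

lemma pdf_int : Integrable pdf := integrable_gaussianPDFReal 0 1

lemma pdf_pos (x : ℝ) : 0 < pdf x := gaussianPDFReal_pos 0 1 x one_ne_zero

lemma pdf_cont : Continuous pdf := by
  unfold pdf gaussianPDFReal; fun_prop

lemma pdf_le_one (x : ℝ) : pdf x ≤ 1 := by
  unfold pdf gaussianPDFReal
  simp only [NNReal.coe_one, mul_one, sub_zero]
  have h1 : rexp (-x ^ 2 / 2) ≤ 1 := by
    rw [Real.exp_le_one_iff]
    nlinarith [sq_nonneg x]
  have h2 : (1:ℝ) ≤ √(2 * π) := by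
    rw [show (1:ℝ) = √1 by simp]
    exact Real.sqrt_le_sqrt (by nlinarith [Real.pi_gt_three])
  have h3 : (√(2 * π))⁻¹ ≤ 1 := by
    rw [inv_le_one_iff₀]; right; exact h2
  calc (√(2 * π))⁻¹ * rexp (-x ^ 2 / 2) ≤ 1 * 1 :=
        mul_le_mul h3 h1 (Real.exp_nonneg _) (by norm_num)
    _ = 1 := by norm_num

lemma g_apply (s : Set ℝ) : (gaussianReal 0 1) s = ENNReal.ofReal (∫ x in s, pdf x) :=
  gaussianReal_apply_eq_integral 0 one_ne_zero s

lemma Phi_eq_integral (x : ℝ) : Phi x = ∫ u in Iic x, pdf u := by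
  rw [Phi, g_apply, ENNReal.toReal_ofReal]
  exact integral_nonneg fun u => (pdf_pos u).le

lemma Phi_sub_eq (x y : ℝ) : Phi y - Phi x = ∫ u in x..y, pdf u := by
  rw [Phi_eq_integral, Phi_eq_integral]
  have h := intervalIntegral.integral_Iic_sub_Iic (f := pdf)
    (a := x) (b := y) pdf_int.restrict pdf_int.restrict
  exact h

lemma pdf_intInt (x y : ℝ) : IntervalIntegrable pdf volume x y :=
  pdf_cont.intervalIntegrable x y

lemma Phi_strictMono : StrictMono Phi := by
  intro x y hxy
  have h : 0 < Phi y - Phi x := by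
    rw [Phi_sub_eq]
    exact intervalIntegral.intervalIntegral_pos_of_pos (pdf_intInt x y) pdf_pos hxy
  linarith

lemma Phi_mono : Monotone Phi := Phi_strictMono.monotone

lemma Phi_lipschitz {x y : ℝ} (h : x ≤ y) : Phi y - Phi x ≤ y - x := by
  rw [Phi_sub_eq]
  calc ∫ u in x..y, pdf u ≤ ∫ _ in x..y, (1:ℝ) :=
        intervalIntegral.integral_mono_on h (pdf_intInt x y)
          (intervalIntegrable_const) (fun u _ => pdf_le_one u)
    _ = y - x := by simp

lemma Phi_nonneg (x : ℝ) : 0 ≤ Phi x := ENNReal.toReal_nonneg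

lemma Phi_le_one (x : ℝ) : Phi x ≤ 1 := by
  rw [Phi]
  have h := prob_le_one (μ := gaussianReal 0 1) (s := Iic x)
  exact ENNReal.toReal_le_of_le_ofReal zero_le_one (by simpa using h)

lemma Phi_continuous : Continuous Phi := by
  rw [Metric.continuous_iff]
  intro x ε hε
  refine ⟨ε, hε, fun y hy => ?_⟩
  rw [Real.dist_eq] at *
  rcases le_total x y with h | h
  · have h1 : 0 ≤ Phi y - Phi x := by have := Phi_mono h; linarith
    have h2 := Phi_lipschitz h
    rw [abs_of_nonneg h1]
    rw [abs_lt] at hy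
    linarith
  · have h1 : 0 ≤ Phi x - Phi y := by have := Phi_mono h; linarith
    have h2 := Phi_lipschitz h
    rw [abs_of_nonpos (by linarith : Phi y - Phi x ≤ 0)]
    rw [abs_lt] at hy
    linarith

lemma gauss_noatom (x : ℝ) : (gaussianReal 0 1) {x} = 0 :=
  gaussianReal_absolutelyContinuous 0 one_ne_zero (volume_singleton)

lemma Phi_neg (x : ℝ) : Phi (-x) = 1 - Phi x := by
  have hmap : (gaussianReal 0 1).map (fun y => (-1 : ℝ) * y) = gaussianReal 0 1 := by
    rw [gaussianReal_map_const_mul]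
    norm_num
  have hIic : (gaussianReal 0 1) (Iic (-x)) = (gaussianReal 0 1) (Ici x) := by
    conv_lhs => rw [← hmap]
    rw [Measure.map_apply (by fun_prop) measurableSet_Iic]
    congr 1
    ext y
    simp only [mem_preimage, mem_Iic, mem_Ici]
    constructor <;> intro h <;> nlinarith
  have hsplit : (gaussianReal 0 1) (Ici x) + (gaussianReal 0 1) (Iic x)
      = 1 + (gaussianReal 0 1) {x} := by
    have h1 : (gaussianReal 0 1) (Ici x) + (gaussianReal 0 1) (Iio x) = 1 := by
      have hd1 : Disjoint (Ici x) (Iio x) :=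
        disjoint_left.mpr (fun a ha hb => absurd hb (not_lt.mpr ha : ¬ a < x))
      rw [← measure_union hd1 measurableSet_Iio]
      have hu : Ici x ∪ Iio x = univ := by ext y; simp [le_or_gt]
      rw [hu]
      simp
    have h2 : (gaussianReal 0 1) (Iic x) = (gaussianReal 0 1) (Iio x)
        + (gaussianReal 0 1) {x} := by
      have hd2 : Disjoint (Iio x) {x} := disjoint_left.mpr (fun a ha hb => by
        simp only [mem_singleton_iff] at hb
        exact absurd (hb ▸ ha) (lt_irrefl x))
      rw [← measure_union hd2 (measurableSet_singleton x)]
      congr 1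
      ext y; simp [le_iff_lt_or_eq]
    rw [h2, ← add_assoc, h1]
  rw [gauss_noatom, add_zero] at hsplit
  have hfin : (gaussianReal 0 1) (Iic x) ≠ ⊤ := measure_ne_top _ _
  have hfin2 : (gaussianReal 0 1) (Ici x) ≠ ⊤ := measure_ne_top _ _
  rw [Phi, Phi, hIic]
  have := ENNReal.toReal_add hfin2 hfin
  rw [hsplit] at this
  simp at this
  linarith

lemma Phi_zero : Phi 0 = 1/2 := by
  have := Phi_neg 0
  rw [neg_zero] at this
  linarith

lemma Phi_tendsto_atTop : Tendsto Phi atTop (nhds 1) := by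
  have h := tendsto_measure_Iic_atTop (μ := gaussianReal 0 1)
  have h2 : Tendsto (fun x => ((gaussianReal 0 1) (Iic x)).toReal) atTop
      (nhds ((gaussianReal 0 1) univ).toReal) := by
    apply (ENNReal.tendsto_toReal (measure_ne_top _ _)).comp h
  simp at h2; exact h2

lemma Phi_tendsto_atBot : Tendsto Phi atBot (nhds 0) := by
  have h1 : Tendsto (fun x => Phi (-x)) atBot (nhds 1) :=
    Phi_tendsto_atTop.comp tendsto_neg_atBot_atTop
  have h2 : Tendsto (fun x => 1 - Phi (-x)) atBot (nhds (1 - 1)) :=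
    Tendsto.const_sub _ h1
  have heq : (fun x => 1 - Phi (-x)) = Phi := by
    funext x
    have := Phi_neg x
    linarith
  rw [heq] at h2
  simpa using h2

lemma Phi_pos (x : ℝ) : 0 < Phi x := by
  rw [Phi]
  have : (0:ℝ≥0∞) < (gaussianReal 0 1) (Iic x) := by
    rw [g_apply]
    have : (0:ℝ) < ∫ u in Iic x, pdf u := by
      have h := Phi_eq_integral x
      have h1 := Phi_eq_integral (x - 1)
      have h2 : Phi (x-1) < Phi x := Phi_strictMono (by linarith)
      nlinarith [integral_nonneg (f := pdf) (μ := volume.restrict (Iic (x-1))) (fun u => (pdf_pos u).le)]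
    simp [ENNReal.ofReal_pos, this]
  exact ENNReal.toReal_pos this.ne' (measure_ne_top _ _)

lemma Phi_lt_one (x : ℝ) : Phi x < 1 := by
  have h := Phi_neg x
  have := Phi_pos (-x)
  linarith


lemma Phi_surj {u : ℝ} (h0 : 0 < u) (h1 : u < 1) : ∃ x, Phi x = u := by
  have hbot : ∀ᶠ x in atBot, Phi x < u := by
    have := Phi_tendsto_atBot
    exact this.eventually_lt_const h0
  have htop : ∀ᶠ x in atTop, u < Phi x := by
    have := Phi_tendsto_atTop
    exact this.eventually_const_lt h1
  obtain ⟨x0, hx0⟩ := hbot.exists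
  obtain ⟨x1, hx1⟩ := htop.exists
  have hsub := intermediate_value_univ x0 x1 Phi_continuous
  have : u ∈ Icc (Phi x0) (Phi x1) := ⟨hx0.le, hx1.le⟩
  obtain ⟨x, hx⟩ := hsub this
  exact ⟨x, hx⟩

lemma PhiInv_set_eq {u x : ℝ} (hx : Phi x = u) : {y : ℝ | u ≤ Phi y} = Ici x := by
  ext y
  simp only [mem_setOf_eq, mem_Ici, ← hx]
  exact ⟨fun h => (Phi_strictMono.le_iff_le).mp h, fun h => Phi_mono h⟩

lemma PhiInv_spec {u : ℝ} (h0 : 0 < u) (h1 : u < 1) : Phi (PhiInv u) = u := by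
  obtain ⟨x, hx⟩ := Phi_surj h0 h1
  rw [PhiInv, PhiInv_set_eq hx, csInf_Ici, hx]

lemma PhiInv_le_iff {u z : ℝ} (h0 : 0 < u) (h1 : u < 1) : PhiInv u ≤ z ↔ u ≤ Phi z := by
  obtain ⟨x, hx⟩ := Phi_surj h0 h1
  rw [PhiInv, PhiInv_set_eq hx, csInf_Ici, ← hx]
  exact ⟨fun h => Phi_mono h, fun h => (Phi_strictMono.le_iff_le).mp h⟩

lemma PhiInv_mono {u v : ℝ} (h0 : 0 < u) (huv : u ≤ v) (h1 : v < 1) : PhiInv u ≤ PhiInv v := by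
  rw [PhiInv_le_iff h0 (lt_of_le_of_lt huv h1), PhiInv_spec (lt_of_lt_of_le h0 huv) h1]
  exact huv

lemma PhiInv_junk_le {u : ℝ} (hu : u ≤ 0) : PhiInv u = 0 := by
  have : {x : ℝ | u ≤ Phi x} = univ := by
    ext x; simp only [mem_setOf_eq, mem_univ, iff_true]
    exact le_trans hu (Phi_pos x).le
  rw [PhiInv, this, csInf_of_not_bddBelow, Real.sInf_empty]
  intro hb
  obtain ⟨b, hb⟩ := hb
  have := hb (mem_univ (b - 1))
  linarith

lemma PhiInv_junk_ge {u : ℝ} (hu : 1 ≤ u) : PhiInv u = 0 := by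
  have : {x : ℝ | u ≤ Phi x} = ∅ := by
    ext x; simp only [mem_setOf_eq, mem_empty_iff_false, iff_false, not_le]
    exact lt_of_lt_of_le (Phi_lt_one x) hu
  rw [PhiInv, this]
  exact Real.sInf_empty

lemma PhiInv_measurable : Measurable PhiInv := by
  apply measurable_of_Iic
  intro z
  by_cases hz : (0:ℝ) ≤ z
  · have : PhiInv ⁻¹' Iic z = (Ioo 0 1 ∩ Iic (Phi z)) ∪ (Ioo (0:ℝ) 1)ᶜ := by
      ext u
      simp only [mem_preimage, mem_Iic, mem_union, mem_inter_iff, mem_Ioo, mem_compl_iff, not_and_or,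
        not_lt]
      constructor
      · intro h
        by_cases hu : 0 < u ∧ u < 1
        · left
          exact ⟨hu, (PhiInv_le_iff hu.1 hu.2).mp h⟩
        · right
          push_neg at hu
          rcases le_or_gt u 0 with h'|h'
          · left; exact h'
          · right; exact hu h'
      · intro h
        rcases h with ⟨hu, hle⟩ | hu
        · exact (PhiInv_le_iff hu.1 hu.2).mpr hle
        · rcases hu with h'|h'
          · rw [PhiInv_junk_le h']; exact hz
          · rw [PhiInv_junk_ge h']; exact hz
    rw [this]
    exact ((measurableSet_Ioo.inter measurableSet_Iic).union measurableSet_Ioo.compl)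
  · have : PhiInv ⁻¹' Iic z = Ioo 0 1 ∩ Iic (Phi z) := by
      ext u
      simp only [mem_preimage, mem_Iic, mem_inter_iff, mem_Ioo]
      constructor
      · intro h
        by_cases hu : 0 < u ∧ u < 1
        · exact ⟨hu, (PhiInv_le_iff hu.1 hu.2).mp h⟩
        · exfalso
          push_neg at hu
          rcases le_or_gt u 0 with h'|h'
          · rw [PhiInv_junk_le h'] at h; exact hz h
          · rw [PhiInv_junk_ge (hu h')] at h; exact hz h
      · rintro ⟨hu, hle⟩
        exact (PhiInv_le_iff hu.1 hu.2).mpr hle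
    rw [this]
    exact measurableSet_Ioo.inter measurableSet_Iic

lemma pdf_shift {d u : ℝ} (hd : 0 ≤ d) (hu : -d ≤ u) : pdf (u + 2*d) ≤ pdf u := by
  unfold pdf gaussianPDFReal
  apply mul_le_mul_of_nonneg_left _ (by positivity)
  apply Real.exp_le_exp.mpr
  have h2 : ((1:ℝ≥0):ℝ) = 1 := rfl
  rw [h2]
  nlinarith [sq_nonneg u, sq_nonneg (u + 2*d)]

lemma centered_aux {d m : ℝ} (hd : 0 ≤ d) (hm : 0 ≤ m) :
    Phi (m + d) - Phi d ≤ Phi (m - d) - Phi (-d) := by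
  rw [Phi_sub_eq, Phi_sub_eq]
  have hcomp : (∫ u in (-d)..(m - d), pdf (u + 2*d)) = ∫ u in d..(m + d), pdf u := by
    have := intervalIntegral.integral_comp_add_right (a := -d) (b := m - d) (d := 2*d)
      (f := pdf)
    rw [this]
    congr 1 <;> ring
  rw [← hcomp]
  apply intervalIntegral.integral_mono_on (by linarith)
  · exact ((pdf_cont.comp (continuous_id.add continuous_const)).intervalIntegrable _ _)
  · exact pdf_intInt _ _
  · intro u hu
    exact pdf_shift hd hu.1

lemma centered {d m : ℝ} (hd : 0 ≤ d) :
    Phi (m + d) - Phi (m - d) ≤ Phi d - Phi (-d) := by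
  rcases le_total 0 m with hm | hm
  · have := centered_aux hd hm
    linarith
  · have h := centered_aux hd (by linarith : (0:ℝ) ≤ -m)
    have e1 : Phi (-m + d) = 1 - Phi (m - d) := by
      have := Phi_neg (m - d)
      have e : -m + d = -(m - d) := by ring
      rw [e]; linarith
    have e2 : Phi (-m - d) = 1 - Phi (m + d) := by
      have := Phi_neg (m + d)
      have e : -m - d = -(m + d) := by ring
      rw [e]; linarith
    rw [e1] at h
    have e3 : -m - d = -m - d := rfl
    rw [show (-m) - d = -m - d from rfl] at h
    rw [e2] at h
    linarith

lemma interval_min_length {x y c : ℝ} (hc : 0 < c) (hxy : y ≤ x)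
    (h : Phi x - Phi y = Phi c - Phi (-c)) : 2*c ≤ x - y := by
  by_contra h'
  push_neg at h'
  set m := (x + y)/2 with hm
  set d := (x - y)/2 with hd
  have hd0 : 0 ≤ d := by rw [hd]; linarith
  have hdc : d < c := by rw [hd]; linarith
  have hx : x = m + d := by rw [hm, hd]; ring
  have hy : y = m - d := by rw [hm, hd]; ring
  have h1 : Phi x - Phi y ≤ Phi d - Phi (-d) := by
    rw [hx, hy]; exact centered hd0
  have h2 : Phi d < Phi c := Phi_strictMono hdc
  have h3 : Phi (-c) < Phi (-d) := Phi_strictMono (by linarith)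
  linarith

lemma key_ineq {c u : ℝ} (hc : 0 < c) (hu1 : 1 - 2*Phi (-c) < u) (hu2 : u < 1) :
    2*c ≤ PhiInv u - PhiInv (u - (1 - 2*Phi (-c))) := by
  set a := Phi (-c) with ha
  have ha1 : 0 < a := Phi_pos _
  have hca : Phi c = 1 - a := by have := Phi_neg c; rw [← ha] at this; linarith
  have ha2 : a < 1/2 := by
    have : Phi (-c) < Phi 0 := Phi_strictMono (by linarith)
    rw [Phi_zero] at this; linarith
  have hu0 : 0 < u := by linarith
  have hv0 : 0 < u - (1 - 2*a) := by linarith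
  have hv1 : u - (1 - 2*a) < 1 := by linarith
  have hPx : Phi (PhiInv u) = u := PhiInv_spec hu0 hu2
  have hPy : Phi (PhiInv (u - (1 - 2*a))) = u - (1 - 2*a) := PhiInv_spec hv0 hv1
  have hxy : PhiInv (u - (1 - 2*a)) ≤ PhiInv u := PhiInv_mono hv0 (by linarith) hu2
  apply interval_min_length hc hxy
  rw [hPx, hPy, hca]
  ring

/-! ### Rotation copula -/

noncomputable def rot (a : ℝ) (u : ℝ) : ℝ := if u < 1 - 2*a then u + 2*a else u - (1 - 2*a)

noncomputable def C1 (a : ℝ) (p q : ℝ) : ℝ :=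
  (volume (Ioo (0:ℝ) 1 ∩ Iic p ∩ rot a ⁻¹' (Iic q))).toReal

lemma rot_measurable (a : ℝ) : Measurable (rot a) := by
  unfold rot
  exact Measurable.ite measurableSet_Iio (by fun_prop) (by fun_prop)

section RotLemmas

variable {a : ℝ} (ha : 0 < a) (ha2 : a < 1/2)

lemma vol_squeeze {α β : ℝ} {S : Set ℝ} (hαβ : α ≤ β) (h1 : Ioo α β ⊆ S) (h2 : S ⊆ Icc α β) :
    volume S = ENNReal.ofReal (β - α) := by
  apply le_antisymm
  · calc volume S ≤ volume (Icc α β) := measure_mono h2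
      _ = ENNReal.ofReal (β - α) := Real.volume_Icc
  · calc ENNReal.ofReal (β - α) = volume (Ioo α β) := Real.volume_Ioo.symm
      _ ≤ volume S := measure_mono h1

include ha ha2 in
lemma rot_mem_lt {u : ℝ} (hu : u ∈ Ioo (0:ℝ) 1) (h : u < 1 - 2*a) :
    rot a u = u + 2*a ∧ rot a u ∈ Ioo (0:ℝ) 1 := by
  rw [rot, if_pos h]
  exact ⟨rfl, ⟨by linarith [hu.1], by linarith⟩⟩

include ha ha2 in
lemma rot_mem_gt {u : ℝ} (hu : u ∈ Ioo (0:ℝ) 1) (h : 1 - 2*a < u) :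
    rot a u = u - (1 - 2*a) ∧ rot a u ∈ Ioo (0:ℝ) 1 := by
  rw [rot, if_neg (by linarith)]
  exact ⟨rfl, ⟨by linarith, by linarith [hu.2]⟩⟩

include ha ha2 in
lemma rot_vol {q : ℝ} (hq0 : 0 ≤ q) (hq1 : q ≤ 1) :
    volume (Ioo (0:ℝ) 1 ∩ rot a ⁻¹' (Iic q)) = ENNReal.ofReal q := by
  set b := 1 - 2*a with hb
  have hb0 : 0 < b := by rw [hb]; linarith
  have hb1 : b < 1 := by rw [hb]; linarith
  have hsplit : Ioo (0:ℝ) 1 ∩ rot a ⁻¹' (Iic q)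
      = (Ioo 0 b ∩ Iic (q - 2*a)) ∪ (Ico b 1 ∩ Iic (q + b)) := by
    ext u
    simp only [mem_inter_iff, mem_preimage, mem_Iic, mem_Ioo, mem_union, mem_Ico, rot, ← hb]
    constructor
    · rintro ⟨⟨h0, h1⟩, hr⟩
      by_cases h : u < b
      · rw [if_pos h] at hr
        left; exact ⟨⟨h0, h⟩, by linarith⟩
      · rw [if_neg h] at hr
        right; exact ⟨⟨not_lt.mp h, h1⟩, by linarith⟩
    · rintro (⟨⟨h0, h1⟩, hr⟩ | ⟨⟨h0, h1⟩, hr⟩)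
      · rw [if_pos h1]
        exact ⟨⟨h0, by linarith⟩, by linarith⟩
      · rw [if_neg (not_lt.mpr h0)]
        exact ⟨⟨by linarith, h1⟩, by linarith⟩
  rw [hsplit]
  have hdisj : Disjoint (Ioo (0:ℝ) b ∩ Iic (q - 2*a)) (Ico b 1 ∩ Iic (q + b)) := by
    apply disjoint_left.mpr
    rintro u ⟨⟨_, h1⟩, _⟩ ⟨⟨h2, _⟩, _⟩
    linarith
  rw [measure_union hdisj ((measurableSet_Ico.inter measurableSet_Iic))]
  set c1 := max 0 (min (q - 2*a) b) with hc1
  have hA : volume (Ioo (0:ℝ) b ∩ Iic (q - 2*a)) = ENNReal.ofReal c1 := by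
    have hc1b : c1 ≤ b := by
      rw [hc1]; apply max_le hb0.le (min_le_right _ _)
    rw [show ENNReal.ofReal c1 = ENNReal.ofReal (c1 - 0) by norm_num]
    apply vol_squeeze (by rw [hc1]; exact le_max_left _ _)
    · intro u hu
      have huc : u < c1 := hu.2
      have h0 : 0 < u := hu.1
      have : c1 = min (q - 2*a) b := by
        rcases max_cases 0 (min (q - 2*a) b) with ⟨h, _⟩ | ⟨h, _⟩
        · rw [hc1, h] at huc ⊢; linarith
        · rw [hc1, h]
      rw [this] at huc
      exact ⟨⟨h0, lt_of_lt_of_le huc (min_le_right _ _)⟩,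
        le_of_lt (lt_of_lt_of_le huc (min_le_left _ _))⟩
    · rintro u ⟨⟨h0, h1⟩, h2⟩
      refine ⟨h0.le, ?_⟩
      rw [hc1]
      exact le_max_of_le_right (le_min h2 h1.le)
  set c2 := min 1 (q + b) with hc2
  have hc2b : b ≤ c2 := by
    rw [hc2]; exact le_min hb1.le (by linarith)
  have hB : volume (Ico (b:ℝ) 1 ∩ Iic (q + b)) = ENNReal.ofReal (c2 - b) := by
    apply vol_squeeze hc2b
    · rintro u ⟨h1, h2⟩
      have hu1 : u < 1 := lt_of_lt_of_le h2 (by rw [hc2]; exact min_le_left _ _)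
      have huq : u ≤ q + b := le_of_lt (lt_of_lt_of_le h2 (by rw [hc2]; exact min_le_right _ _))
      exact ⟨⟨h1.le, hu1⟩, huq⟩
    · rintro u ⟨⟨h1, h2⟩, h3⟩
      exact ⟨h1, by rw [hc2]; exact le_min h2.le h3⟩
  rw [hA, hB, ← ENNReal.ofReal_add (by rw [hc1]; exact le_max_left _ _) (by linarith)]
  congr 1
  rcases le_total q (2*a) with h | h
  · have e1 : c1 = 0 := by
      rw [hc1, max_eq_left]
      exact min_le_of_left_le (by linarith)
    have e2 : c2 = q + b := by
      rw [hc2, min_eq_right]; rw [hb]; linarith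
    rw [e1, e2]; ring
  · have e1 : c1 = q - 2*a := by
      rw [hc1, min_eq_left (by rw [hb]; linarith), max_eq_right (by linarith)]
    have e2 : c2 = 1 := by
      rw [hc2, min_eq_left]; rw [hb]; linarith
    rw [e1, e2]; rw [hb]; ring


lemma C1_meas_set (a p q : ℝ) : MeasurableSet (Ioo (0:ℝ) 1 ∩ Iic p ∩ rot a ⁻¹' (Iic q)) :=
  (measurableSet_Ioo.inter measurableSet_Iic).inter ((rot_measurable a) measurableSet_Iic)

lemma vol_fin {S : Set ℝ} (h : S ⊆ Ioo (0:ℝ) 1) : volume S ≠ ⊤ := by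
  have : volume S ≤ volume (Ioo (0:ℝ) 1) := measure_mono h
  rw [Real.volume_Ioo] at this
  exact ne_top_of_le_ne_top (by simp) this

lemma C1_diff {a u₁ u₂ : ℝ} (hu : u₁ ≤ u₂) (v : ℝ) :
    C1 a u₂ v - C1 a u₁ v
      = (volume (Ioo (0:ℝ) 1 ∩ (Iic u₂ \ Iic u₁) ∩ rot a ⁻¹' (Iic v))).toReal := by
  set S := Ioo (0:ℝ) 1 ∩ Iic u₁ ∩ rot a ⁻¹' (Iic v) with hS
  set T := Ioo (0:ℝ) 1 ∩ Iic u₂ ∩ rot a ⁻¹' (Iic v) with hT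
  have hST : S ⊆ T := by
    rintro u ⟨⟨h1, h2⟩, h3⟩
    exact ⟨⟨h1, le_trans h2 hu⟩, h3⟩
  have hTd : T \ S = Ioo (0:ℝ) 1 ∩ (Iic u₂ \ Iic u₁) ∩ rot a ⁻¹' (Iic v) := by
    ext u
    simp only [hS, hT, mem_diff, mem_inter_iff, mem_preimage, mem_Iic]
    tauto
  have hadd : volume S + volume (T \ S) = volume T := by
    rw [measure_add_diff (C1_meas_set a u₁ v).nullMeasurableSet T, union_eq_right.mpr hST]
  have hfinS : volume S ≠ ⊤ := vol_fin (fun u hu => hu.1.1)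
  have hfinD : volume (T \ S) ≠ ⊤ := vol_fin (fun u hu => hu.1.1.1)
  have := congrArg ENNReal.toReal hadd
  rw [ENNReal.toReal_add hfinS hfinD] at this
  rw [C1, C1, ← hS, ← hT, ← hTd]
  linarith [this]

lemma C1_rect {a u₁ u₂ v₁ v₂ : ℝ} (hu : u₁ ≤ u₂) (hv : v₁ ≤ v₂) :
    0 ≤ C1 a u₂ v₂ - C1 a u₁ v₂ - C1 a u₂ v₁ + C1 a u₁ v₁ := by
  have h1 := C1_diff (a := a) hu v₁
  have h2 := C1_diff (a := a) hu v₂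
  have hmono : volume (Ioo (0:ℝ) 1 ∩ (Iic u₂ \ Iic u₁) ∩ rot a ⁻¹' (Iic v₁))
      ≤ volume (Ioo (0:ℝ) 1 ∩ (Iic u₂ \ Iic u₁) ∩ rot a ⁻¹' (Iic v₂)) := by
    apply measure_mono
    rintro u ⟨h1, h2⟩
    exact ⟨h1, le_trans h2 hv⟩
  have := ENNReal.toReal_mono (vol_fin (fun u hu => hu.1.1)) hmono
  linarith

include ha ha2 in
lemma C1_p0 (p : ℝ) : C1 a p 0 = 0 := by
  rw [C1]
  have hsub : Ioo (0:ℝ) 1 ∩ Iic p ∩ rot a ⁻¹' (Iic 0) ⊆ {1 - 2*a} := by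
    rintro u ⟨⟨⟨h0, h1⟩, _⟩, hr⟩
    simp only [mem_preimage, mem_Iic, rot] at hr
    simp only [mem_singleton_iff]
    by_cases h : u < 1 - 2*a
    · rw [if_pos h] at hr; linarith
    · rw [if_neg h] at hr; push_neg at h; linarith
  rw [measure_mono_null hsub (by simp)]
  simp

lemma C1_0q (a q : ℝ) : C1 a 0 q = 0 := by
  rw [C1]
  have hsub : Ioo (0:ℝ) 1 ∩ Iic 0 ∩ rot a ⁻¹' (Iic q) ⊆ (∅ : Set ℝ) := by
    rintro u ⟨⟨⟨h0, _⟩, h1⟩, _⟩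
    exact absurd h1 (not_le.mpr h0)
  rw [measure_mono_null hsub (by simp)]
  simp

include ha ha2 in
lemma C1_p1 {p : ℝ} (hp0 : 0 ≤ p) (hp1 : p ≤ 1) : C1 a p 1 = p := by
  rw [C1]
  have heq : Ioo (0:ℝ) 1 ∩ Iic p ∩ rot a ⁻¹' (Iic 1) = Ioo (0:ℝ) 1 ∩ Iic p := by
    apply inter_eq_left.mpr
    rintro u ⟨⟨h0, h1⟩, _⟩
    simp only [mem_preimage, mem_Iic, rot]
    by_cases h : u < 1 - 2*a
    · rw [if_pos h]; linarith
    · rw [if_neg h]; linarith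
  rw [heq, vol_squeeze hp0 ?_ ?_, ENNReal.toReal_ofReal (by linarith)]
  · ring
  · rintro u ⟨h0, h1⟩
    exact ⟨⟨h0, lt_of_lt_of_le h1 hp1⟩, h1.le⟩
  · rintro u ⟨⟨h0, h1⟩, h2⟩
    exact ⟨h0.le, h2⟩

include ha ha2 in
lemma C1_1q {q : ℝ} (hq0 : 0 ≤ q) (hq1 : q ≤ 1) : C1 a 1 q = q := by
  rw [C1]
  have heq : Ioo (0:ℝ) 1 ∩ Iic 1 ∩ rot a ⁻¹' (Iic q) = Ioo (0:ℝ) 1 ∩ rot a ⁻¹' (Iic q) := by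
    rw [inter_assoc, inter_comm (Iic 1), ← inter_assoc]
    apply inter_eq_left.mpr
    rintro u ⟨⟨h0, h1⟩, _⟩
    exact h1.le
  rw [heq, rot_vol ha ha2 hq0 hq1, ENNReal.toReal_ofReal hq0]

end RotLemmas

lemma min_rect {u₁ u₂ v₁ v₂ : ℝ} (hu : u₁ ≤ u₂) (hv : v₁ ≤ v₂) :
    0 ≤ min u₂ v₂ - min u₁ v₂ - min u₂ v₁ + min u₁ v₁ := by
  simp only [min_def]
  split_ifs <;> linarith

noncomputable def nuu : Measure ℝ := volume.restrict (Ioo (0:ℝ) 1)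

instance : IsProbabilityMeasure nuu :=
  ⟨by rw [nuu, Measure.restrict_apply_univ, Real.volume_Ioo]; norm_num⟩

noncomputable def Tmap (s a : ℝ) (u : ℝ) : ℝ × ℝ := (s * PhiInv u, s * PhiInv (rot a u))

lemma Tmap_measurable (s a : ℝ) : Measurable (Tmap s a) :=
  (PhiInv_measurable.const_mul s).prodMk
    ((PhiInv_measurable.comp (rot_measurable a)).const_mul s)

noncomputable def mu1 (s a : ℝ) : Measure (ℝ × ℝ) := nuu.map (Tmap s a)

noncomputable def mu0 (s : ℝ) : Measure (ℝ × ℝ) :=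
  (gaussianReal 0 1).map (fun z => (s * z, s * z))

instance (s a : ℝ) : IsProbabilityMeasure (mu1 s a) :=
  Measure.isProbabilityMeasure_map (Tmap_measurable s a).aemeasurable

instance (s : ℝ) : IsProbabilityMeasure (mu0 s) :=
  Measure.isProbabilityMeasure_map (by fun_prop)

section MainConstr

variable {s c : ℝ} (hs : 0 < s) (hc : 0 < c)

include hc in
lemma a_pos : 0 < Phi (-c) := Phi_pos _

include hc in
lemma a_lt_half : Phi (-c) < 1/2 := by
  have : Phi (-c) < Phi 0 := Phi_strictMono (by linarith)
  rwa [Phi_zero] at this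

include hs hc in
lemma mu1_cdf (x y : ℝ) :
    ((mu1 s (Phi (-c))) (Iic x ×ˢ Iic y)).toReal = C1 (Phi (-c)) (Phi (x/s)) (Phi (y/s)) := by
  set a := Phi (-c) with ha
  have ha0 : 0 < a := a_pos hc
  have ha2 : a < 1/2 := a_lt_half hc
  set b := 1 - 2*a with hb
  rw [mu1, Measure.map_apply (Tmap_measurable s a) (measurableSet_Iic.prod measurableSet_Iic),
    nuu, Measure.restrict_apply ((Tmap_measurable s a) (measurableSet_Iic.prod measurableSet_Iic)),
    C1]
  congr 1
  rw [← measure_diff_null (t := {b}) (by simp), ← measure_diff_null (s := Ioo (0:ℝ) 1 ∩ Iic (Phi (x/s)) ∩ rot a ⁻¹' (Iic (Phi (y/s)))) (t := {b}) (by simp)]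
  congr 1
  ext u
  simp only [mem_diff, mem_inter_iff, mem_preimage, mem_prod, mem_Iic, mem_Ioo,
    mem_singleton_iff, Tmap]
  constructor
  · rintro ⟨⟨⟨hx, hy⟩, hu⟩, hub⟩
    have hx' : PhiInv u ≤ x/s := by rw [le_div_iff₀ hs]; linarith [mul_comm s (PhiInv u)]
    have hup : u ≤ Phi (x/s) := (PhiInv_le_iff hu.1 hu.2).mp hx'
    have hrot : rot a u ∈ Ioo (0:ℝ) 1 := by
      rcases lt_or_gt_of_ne hub with h | h
      · exact (rot_mem_lt ha0 ha2 hu (by rw [← hb] at *; exact h)).2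
      · exact (rot_mem_gt ha0 ha2 hu (by rw [← hb] at *; exact h)).2
    have hy' : PhiInv (rot a u) ≤ y/s := by rw [le_div_iff₀ hs]; linarith [mul_comm s (PhiInv (rot a u))]
    have huq : rot a u ≤ Phi (y/s) := (PhiInv_le_iff hrot.1 hrot.2).mp hy'
    exact ⟨⟨⟨hu, hup⟩, huq⟩, hub⟩
  · rintro ⟨⟨⟨hu, hup⟩, huq⟩, hub⟩
    have hrot : rot a u ∈ Ioo (0:ℝ) 1 := by
      rcases lt_or_gt_of_ne hub with h | h
      · exact (rot_mem_lt ha0 ha2 hu (by rw [← hb] at *; exact h)).2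
      · exact (rot_mem_gt ha0 ha2 hu (by rw [← hb] at *; exact h)).2
    have hx' : PhiInv u ≤ x/s := (PhiInv_le_iff hu.1 hu.2).mpr hup
    have hy' : PhiInv (rot a u) ≤ y/s := (PhiInv_le_iff hrot.1 hrot.2).mpr huq
    rw [div_eq_mul_inv] at hx' hy'
    constructor
    constructor
    · constructor
      · calc s * PhiInv u ≤ s * (x * s⁻¹) := by
              apply mul_le_mul_of_nonneg_left hx' hs.le
          _ = x := by field_simp
      · calc s * PhiInv (rot a u) ≤ s * (y * s⁻¹) := by
              apply mul_le_mul_of_nonneg_left hy' hs.le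
          _ = y := by field_simp
    · exact hu
    · exact hub

include hs hc in
lemma mu1_event {η : ℝ} (hη : η = 2*c*s) :
    ((mu1 s (Phi (-c))) {q : ℝ × ℝ | η ≤ q.1 - q.2}).toReal = 2 * Phi (-c) := by
  set a := Phi (-c) with ha
  have ha0 : 0 < a := a_pos hc
  have ha2 : a < 1/2 := a_lt_half hc
  set b := 1 - 2*a with hb
  have hmeas : MeasurableSet {q : ℝ × ℝ | η ≤ q.1 - q.2} := by
    apply measurableSet_le measurable_const
    fun_prop
  rw [mu1, Measure.map_apply (Tmap_measurable s a) hmeas,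
    nuu, Measure.restrict_apply ((Tmap_measurable s a) hmeas)]
  have hvol : volume (Tmap s a ⁻¹' {q : ℝ × ℝ | η ≤ q.1 - q.2} ∩ Ioo (0:ℝ) 1)
      = ENNReal.ofReal (1 - b) := by
    apply vol_squeeze (by rw [hb]; linarith)
    · intro u hu
      have hu1 : u ∈ Ioo (0:ℝ) 1 := ⟨by linarith [hu.1, show (0:ℝ) < b by rw [hb]; linarith], hu.2⟩
      obtain ⟨hre, hrm⟩ := rot_mem_gt ha0 ha2 hu1 (by rw [← hb]; exact hu.1)
      have hkey : 2*c ≤ PhiInv u - PhiInv (u - (1 - 2*a)) := by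
        apply key_ineq hc
        · rw [← ha, ← hb]; exact hu.1
        · exact hu1.2
      constructor
      · simp only [mem_preimage, mem_setOf_eq, Tmap]
        have : s * (2*c) ≤ s * (PhiInv u - PhiInv (u - (1 - 2*a))) :=
          mul_le_mul_of_nonneg_left hkey hs.le
        rw [hre, ← hb]
        calc η = s * (2*c) := by rw [hη]; ring
          _ ≤ s * (PhiInv u - PhiInv (u - b)) := by rw [← hb] at this; exact this
          _ = s * PhiInv u - s * PhiInv (u - b) := by ring
      · exact hu1
    · rintro u ⟨hset, hu⟩
      simp only [mem_preimage, mem_setOf_eq, Tmap] at hset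
      refine ⟨?_, hu.2.le⟩
      by_contra h
      push_neg at h
      obtain ⟨hre, hrm⟩ := rot_mem_lt ha0 ha2 hu (by rw [← hb]; exact h)
      have hmono : PhiInv u ≤ PhiInv (u + 2*a) := by
        apply PhiInv_mono hu.1 (by linarith)
        rw [hb] at h; linarith
      rw [hre] at hset
      have : s * PhiInv u ≤ s * PhiInv (u + 2*a) := mul_le_mul_of_nonneg_left hmono hs.le
      have hη0 : 0 < η := by rw [hη]; positivity
      linarith
  rw [hvol, ENNReal.toReal_ofReal (by rw [hb]; linarith)]
  rw [hb]; ring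

include hs in
lemma mu0_cdf (x y : ℝ) :
    ((mu0 s) (Iic x ×ˢ Iic y)).toReal = min (Phi (x/s)) (Phi (y/s)) := by
  rw [mu0, Measure.map_apply (by fun_prop) (measurableSet_Iic.prod measurableSet_Iic)]
  have hpre : (fun z => (s * z, s * z)) ⁻¹' (Iic x ×ˢ Iic y) = Iic (min (x/s) (y/s)) := by
    ext z
    simp only [mem_preimage, mem_prod, mem_Iic, le_min_iff]
    rw [← le_div_iff₀' hs, ← le_div_iff₀' hs]
  rw [hpre]
  rcases le_total (x/s) (y/s) with h | h
  · rw [min_eq_left h, min_eq_left (Phi_mono h)]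
    rfl
  · rw [min_eq_right h, min_eq_right (Phi_mono h)]
    rfl

lemma mu0_event {η : ℝ} (hη : 0 < η) (s : ℝ) :
    ((mu0 s) {q : ℝ × ℝ | η ≤ q.1 - q.2}).toReal = 0 := by
  have hmeas : MeasurableSet {q : ℝ × ℝ | η ≤ q.1 - q.2} := by
    apply measurableSet_le measurable_const
    fun_prop
  rw [mu0, Measure.map_apply (by fun_prop) hmeas]
  have : (fun z => (s * z, s * z)) ⁻¹' {q : ℝ × ℝ | η ≤ q.1 - q.2} = ∅ := by
    ext z
    simp only [mem_preimage, mem_setOf_eq, mem_empty_iff_false, iff_false, not_le]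
    linarith
  rw [this]
  simp

end MainConstr

lemma mix_toReal (l : ℝ) (hl0 : 0 ≤ l) (hl1 : l ≤ 1) (μa μb : Measure (ℝ × ℝ))
    [IsProbabilityMeasure μa] [IsProbabilityMeasure μb] (S : Set (ℝ × ℝ)) :
    ((ENNReal.ofReal l • μa + ENNReal.ofReal (1 - l) • μb) S).toReal
      = l * (μa S).toReal + (1 - l) * (μb S).toReal := by
  rw [Measure.add_apply, Measure.smul_apply, Measure.smul_apply, smul_eq_mul, smul_eq_mul,
    ENNReal.toReal_add (ENNReal.mul_ne_top ENNReal.ofReal_ne_top (measure_ne_top _ _))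
      (ENNReal.mul_ne_top ENNReal.ofReal_ne_top (measure_ne_top _ _)),
    ENNReal.toReal_mul, ENNReal.toReal_mul, ENNReal.toReal_ofReal hl0,
    ENNReal.toReal_ofReal (by linarith)]

def IsCopula (C : ℝ → ℝ → ℝ) : Prop :=
  (∀ u₁ u₂ v₁ v₂ : ℝ, 0 ≤ u₁ → u₁ ≤ u₂ → u₂ ≤ 1 → 0 ≤ v₁ → v₁ ≤ v₂ → v₂ ≤ 1 →
    0 ≤ C u₂ v₂ - C u₁ v₂ - C u₂ v₁ + C u₁ v₁) ∧
  (∀ u : ℝ, 0 ≤ u → u ≤ 1 → C u 0 = 0 ∧ C 0 u = 0 ∧ C u 1 = u ∧ C 1 u = u)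

lemma upper {η t : ℝ} (hη : 0 < η) (ht : 0 < t) {C : ℝ → ℝ → ℝ} {μ : Measure (ℝ × ℝ)}
    (hC : IsCopula C) (hμ : IsProbabilityMeasure μ)
    (hcdf : ∀ x y : ℝ, (μ (Set.Iic x ×ˢ Set.Iic y)).toReal
      = C (Phi (x / Real.sqrt t)) (Phi (y / Real.sqrt t))) :
    (μ {q : ℝ × ℝ | η ≤ q.1 - q.2}).toReal ≤ 2 * Phi (-η / (2 * Real.sqrt t)) := by
  set s := Real.sqrt t with hsdef
  have hs : 0 < s := Real.sqrt_pos.mpr ht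
  set c := η / 2 / s with hcdef
  have hc : 0 < c := by positivity
  set a := Phi (-c) with hadef
  have ha0 : 0 < a := Phi_pos _
  have harg : -η / (2 * s) = -c := by rw [hcdef, div_div, neg_div]
  rw [harg]
  have hCright : ∀ u v : ℝ, 0 ≤ u → u ≤ 1 → 0 ≤ v → v ≤ 1 → C u v ≤ v := by
    intro u v hu0 hu1 hv0 hv1
    have h := hC.1 u 1 0 v hu0 hu1 le_rfl le_rfl hv0 hv1
    have h1 := (hC.2 u hu0 hu1).1
    have h2 := (hC.2 v hv0 hv1).2.2.2
    have h3 := (hC.2 1 zero_le_one le_rfl).1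
    linarith
  have hClow : ∀ u v : ℝ, 0 ≤ u → u ≤ 1 → 0 ≤ v → v ≤ 1 → u + v - 1 ≤ C u v := by
    intro u v hu0 hu1 hv0 hv1
    have h := hC.1 u 1 v 1 hu0 hu1 le_rfl hv0 hv1 le_rfl
    have h1 := (hC.2 u hu0 hu1).2.2.1
    have h2 := (hC.2 v hv0 hv1).2.2.2
    have h3 := (hC.2 1 zero_le_one le_rfl).2.2.1
    linarith
  set S := {q : ℝ × ℝ | η ≤ q.1 - q.2} with hSdef
  set A := (Iio (η/2) ×ˢ (univ : Set ℝ))ᶜ with hAdef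
  set B := (univ : Set ℝ) ×ˢ Iic (-(η/2)) with hBdef
  have hA'meas : MeasurableSet (Iio (η/2) ×ˢ (univ : Set ℝ)) :=
    measurableSet_Iio.prod MeasurableSet.univ
  have hSsub : S ⊆ A ∪ B := by
    rintro q hq
    simp only [hSdef, mem_setOf_eq] at hq
    by_cases h : η/2 ≤ q.1
    · left
      simp only [hAdef, mem_compl_iff, mem_prod, mem_Iio, mem_univ, and_true, not_lt]
      exact h
    · right
      push_neg at h
      simp only [hBdef, mem_prod, mem_univ, mem_Iic, true_and]
      linarith
  have hBle : μ B ≤ ENNReal.ofReal a := by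
    have hBeq : B = ⋃ n : ℕ, Iic (n:ℝ) ×ˢ Iic (-(η/2)) := by
      ext q
      simp only [hBdef, mem_prod, mem_univ, true_and, mem_iUnion, mem_Iic]
      constructor
      · intro h
        obtain ⟨n, hn⟩ := exists_nat_ge q.1
        exact ⟨n, hn, h⟩
      · rintro ⟨n, _, h⟩
        exact h
    rw [hBeq, Directed.measure_iUnion ?_]
    · apply iSup_le
      intro n
      rw [← ENNReal.ofReal_toReal (measure_ne_top μ (Iic (n:ℝ) ×ˢ Iic (-(η/2)))), hcdf]
      apply ENNReal.ofReal_le_ofReal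
      have harg2 : -(η/2) / s = -c := by rw [hcdef, neg_div]
      rw [harg2]
      exact hCright _ _ (Phi_nonneg _) (Phi_le_one _) (Phi_nonneg _) (Phi_le_one _)
    · intro m n
      refine ⟨max m n, ?_, ?_⟩
      · exact prod_mono (Iic_subset_Iic.mpr (by exact_mod_cast le_max_left m n)) subset_rfl
      · exact prod_mono (Iic_subset_Iic.mpr (by exact_mod_cast le_max_right m n)) subset_rfl
  have hSA : (μ S).toReal ≤ (μ A).toReal + a := by
    have h1 : μ S ≤ μ A + ENNReal.ofReal a :=
      le_trans (le_trans (measure_mono hSsub) (measure_union_le A B))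
        (add_le_add le_rfl hBle)
    have h3 := ENNReal.toReal_mono
      (ENNReal.add_ne_top.mpr ⟨measure_ne_top μ A, ENNReal.ofReal_ne_top⟩) h1
    rwa [ENNReal.toReal_add (measure_ne_top μ A) ENNReal.ofReal_ne_top,
      ENNReal.toReal_ofReal ha0.le] at h3
  have hAbound : ∀ x' : ℝ, x' < η/2 → ∀ n : ℕ,
      (μ A).toReal ≤ 2 - Phi (x'/s) - Phi ((n:ℝ)/s) := by
    intro x' hx' n
    have hsub : Iic x' ×ˢ Iic (n:ℝ) ⊆ Iio (η/2) ×ˢ (univ : Set ℝ) :=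
      prod_mono (fun z hz => lt_of_le_of_lt hz hx') (subset_univ _)
    have h1 : Phi (x'/s) + Phi ((n:ℝ)/s) - 1 ≤ (μ (Iio (η/2) ×ˢ (univ : Set ℝ))).toReal := by
      have hm := ENNReal.toReal_mono (measure_ne_top μ _) (measure_mono hsub)
      rw [hcdf] at hm
      have h2 := hClow (Phi (x'/s)) (Phi ((n:ℝ)/s)) (Phi_nonneg _) (Phi_le_one _)
        (Phi_nonneg _) (Phi_le_one _)
      linarith
    have hcompl : μ A = 1 - μ (Iio (η/2) ×ˢ (univ : Set ℝ)) := prob_compl_eq_one_sub hA'meas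
    have htr : (μ A).toReal = 1 - (μ (Iio (η/2) ×ˢ (univ : Set ℝ))).toReal := by
      rw [hcompl, ENNReal.toReal_sub_of_le prob_le_one ENNReal.one_ne_top, ENNReal.toReal_one]
    rw [htr]
    linarith
  have hstep1 : ∀ x' : ℝ, x' < η/2 → (μ S).toReal ≤ 1 - Phi (x'/s) + a := by
    intro x' hx'
    have htend : Tendsto (fun n : ℕ => 2 - Phi (x'/s) - Phi ((n:ℝ)/s) + a) atTop
        (𝓝 (2 - Phi (x'/s) - 1 + a)) := by
      apply Tendsto.add_const
      apply Tendsto.const_sub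
      apply Phi_tendsto_atTop.comp
      exact Tendsto.atTop_div_const hs tendsto_natCast_atTop_atTop
    have hb : ∀ n : ℕ, (μ S).toReal ≤ 2 - Phi (x'/s) - Phi ((n:ℝ)/s) + a := by
      intro n
      have := hAbound x' hx' n
      linarith [hSA]
    have h4 := ge_of_tendsto' htend hb
    linarith
  have htend2 : Tendsto (fun k : ℕ => 1 - Phi ((η/2 - 1/((k:ℝ)+1))/s) + a) atTop
      (𝓝 (1 - Phi ((η/2)/s) + a)) := by
    apply Tendsto.add_const
    apply Tendsto.const_sub
    apply (Phi_continuous.tendsto _).comp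
    apply Tendsto.div_const
    have h0 : Tendsto (fun k : ℕ => 1/((k:ℝ)+1)) atTop (𝓝 0) :=
      tendsto_one_div_add_atTop_nhds_zero_nat
    have := (tendsto_const_nhds (x := η/2) (f := atTop (α := ℕ))).sub h0
    simpa using this
  have hball : ∀ k : ℕ, (μ S).toReal ≤ 1 - Phi ((η/2 - 1/((k:ℝ)+1))/s) + a := by
    intro k
    apply hstep1
    have : 0 < 1/((k:ℝ)+1) := by positivity
    linarith
  have hfin := ge_of_tendsto' htend2 hball
  have hPc : Phi (η/2/s) = 1 - a := by
    have := Phi_neg c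
    rw [← hadef] at this
    rw [← hcdef]
    linarith
  rw [hPc] at hfin
  linarith

lemma attain {η t p : ℝ} (hη : 0 < η) (ht : 0 < t)
    (hp0 : 0 ≤ p) (hp1 : p ≤ 2 * Phi (-η / (2 * Real.sqrt t))) :
    ∃ (C : ℝ → ℝ → ℝ) (μ : Measure (ℝ × ℝ)), IsCopula C ∧ IsProbabilityMeasure μ ∧
      (∀ x y : ℝ, (μ (Set.Iic x ×ˢ Set.Iic y)).toReal
        = C (Phi (x / Real.sqrt t)) (Phi (y / Real.sqrt t))) ∧
      (μ {q : ℝ × ℝ | η ≤ q.1 - q.2}).toReal = p := by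
  set s := Real.sqrt t with hsdef
  have hs : 0 < s := Real.sqrt_pos.mpr ht
  set c := η / 2 / s with hcdef
  have hc : 0 < c := by positivity
  have ha0 : 0 < Phi (-c) := Phi_pos _
  have ha2 : Phi (-c) < 1/2 := a_lt_half hc
  have harg : -η / (2 * s) = -c := by rw [hcdef, div_div, neg_div]
  rw [harg] at hp1
  have hcs : η = 2*c*s := by rw [hcdef]; field_simp
  set l := p / (2 * Phi (-c)) with hldef
  have hl0 : 0 ≤ l := div_nonneg hp0 (by linarith)
  have hl1 : l ≤ 1 := by rw [hldef, div_le_one (by linarith)]; exact hp1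
  refine ⟨fun u v => l * C1 (Phi (-c)) u v + (1 - l) * min u v,
    ENNReal.ofReal l • mu1 s (Phi (-c)) + ENNReal.ofReal (1 - l) • mu0 s, ?_, ?_, ?_, ?_⟩
  · constructor
    · intro u₁ u₂ v₁ v₂ h1 h2 h3 h4 h5 h6
      have hr1 := C1_rect (a := Phi (-c)) h2 h5
      have hr2 := min_rect h2 h5
      have hkey : (l * C1 (Phi (-c)) u₂ v₂ + (1 - l) * min u₂ v₂)
          - (l * C1 (Phi (-c)) u₁ v₂ + (1 - l) * min u₁ v₂)
          - (l * C1 (Phi (-c)) u₂ v₁ + (1 - l) * min u₂ v₁)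
          + (l * C1 (Phi (-c)) u₁ v₁ + (1 - l) * min u₁ v₁)
          = l * (C1 (Phi (-c)) u₂ v₂ - C1 (Phi (-c)) u₁ v₂ - C1 (Phi (-c)) u₂ v₁
              + C1 (Phi (-c)) u₁ v₁)
            + (1 - l) * (min u₂ v₂ - min u₁ v₂ - min u₂ v₁ + min u₁ v₁) := by ring
      show (0:ℝ) ≤ _
      rw [hkey]
      exact add_nonneg (mul_nonneg hl0 hr1) (mul_nonneg (by linarith) hr2)
    · intro u hu0 hu1
      refine ⟨?_, ?_, ?_, ?_⟩
      · show l * C1 (Phi (-c)) u 0 + (1 - l) * min u 0 = 0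
        rw [C1_p0 ha0 ha2, min_eq_right hu0]; ring
      · show l * C1 (Phi (-c)) 0 u + (1 - l) * min 0 u = 0
        rw [C1_0q, min_eq_left hu0]; ring
      · show l * C1 (Phi (-c)) u 1 + (1 - l) * min u 1 = u
        rw [C1_p1 ha0 ha2 hu0 hu1, min_eq_left hu1]; ring
      · show l * C1 (Phi (-c)) 1 u + (1 - l) * min 1 u = u
        rw [C1_1q ha0 ha2 hu0 hu1, min_eq_right hu1]; ring
  · constructor
    rw [Measure.add_apply, Measure.smul_apply, Measure.smul_apply, smul_eq_mul, smul_eq_mul,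
      measure_univ, measure_univ, mul_one, mul_one, ← ENNReal.ofReal_add hl0 (by linarith)]
    norm_num
  · intro x y
    rw [mix_toReal l hl0 hl1, mu1_cdf hs hc, mu0_cdf hs]
  · rw [mix_toReal l hl0 hl1, mu1_event hs hc hcs, mu0_event hη]
    rw [hldef]
    field_simp
    ring

end PhiLemmas

/-- Range of `P(B¹_t - B²_t ≥ η)` over all copulae of two centered Gaussians of
variance `t`. -/
theorem stmt13 (η t : ℝ) (hη : 0 < η) (ht : 0 < t) :
    {p : ℝ | ∃ (C : ℝ → ℝ → ℝ) (μ : Measure (ℝ × ℝ)), IsCopula C ∧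
        IsProbabilityMeasure μ ∧
        (∀ x y : ℝ, (μ (Set.Iic x ×ˢ Set.Iic y)).toReal
          = C (Phi (x / Real.sqrt t)) (Phi (y / Real.sqrt t))) ∧
        (μ {q : ℝ × ℝ | η ≤ q.1 - q.2}).toReal = p}
      = Set.Icc 0 (2 * Phi (-η / (2 * Real.sqrt t))) := by
  ext p
  simp only [Set.mem_setOf_eq, Set.mem_Icc]
  constructor
  · rintro ⟨C, μ, hC, hμ, hcdf, hev⟩
    refine ⟨hev ▸ ENNReal.toReal_nonneg, hev ▸ PhiLemmas.upper hη ht hC hμ hcdf⟩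
  · rintro ⟨hp0, hp1⟩
    exact PhiLemmas.attain hη ht hp0 hp1
end

section
/- In the multi-barrier correlation model, the counting process N_t = Σ_{n≥1} 1_{τ_n ≤ t} satisfies E(N_t) < ∞, hence N_t < ∞ almost surely, for every t > 0. -/
open MeasureTheory ProbabilityTheory Real Set

lemma Phi_neg_le (a : ℝ) (ha : 0 ≤ a) : Phi (-a) ≤ Real.sqrt 2 * Real.exp (-a^2/4) := by
  have h1 : (1 : NNReal) ≠ 0 := one_ne_zero
  rw [Phi, gaussianReal_apply_eq_integral 0 h1, ENNReal.toReal_ofReal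
    (setIntegral_nonneg measurableSet_Iic fun x _ => gaussianPDFReal_nonneg 0 1 x)]
  have hg : Integrable (fun x : ℝ => (Real.sqrt (2*π))⁻¹ *
      (Real.exp (-a^2/4) * Real.exp (-(1/4) * x^2))) := by
    exact (((integrable_exp_neg_mul_sq (by norm_num : (0:ℝ) < 1/4)).const_mul _).const_mul _)
  have hbound : ∀ x ∈ Iic (-a), gaussianPDFReal 0 1 x ≤
      (Real.sqrt (2*π))⁻¹ * (Real.exp (-a^2/4) * Real.exp (-(1/4) * x^2)) := by
    intro x hx
    simp only [mem_Iic] at hx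
    have hx2 : a ^ 2 ≤ x ^ 2 := by
      have h1 : a ≤ -x := by linarith
      calc a ^ 2 ≤ (-x) ^ 2 := by exact pow_le_pow_left₀ ha h1 2
        _ = x ^ 2 := by ring
    have : gaussianPDFReal 0 1 x = (Real.sqrt (2*π))⁻¹ * Real.exp (- x^2 / 2) := by
      simp [gaussianPDFReal]
    rw [this, ← Real.exp_add]
    exact mul_le_mul_of_nonneg_left (Real.exp_le_exp.mpr (by nlinarith)) (by positivity)
  calc ∫ x in Iic (-a), gaussianPDFReal 0 1 x
      ≤ ∫ x in Iic (-a), (Real.sqrt (2*π))⁻¹ *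
          (Real.exp (-a^2/4) * Real.exp (-(1/4) * x^2)) := by
        exact setIntegral_mono_on (integrable_gaussianPDFReal 0 1).integrableOn
          hg.integrableOn measurableSet_Iic hbound
    _ ≤ ∫ x, (Real.sqrt (2*π))⁻¹ * (Real.exp (-a^2/4) * Real.exp (-(1/4) * x^2)) := by
        exact setIntegral_le_integral hg (ae_of_all _ fun x => by positivity)
    _ = (Real.sqrt (2*π))⁻¹ * Real.exp (-a^2/4) * Real.sqrt (π/(1/4)) := by
        rw [integral_const_mul]
        rw [integral_const_mul, integral_gaussian (1/4)]
        ring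
    _ = Real.sqrt 2 * Real.exp (-a^2/4) := by
        have hpi : (0:ℝ) < π := Real.pi_pos
        have h4 : Real.sqrt (π/(1/4)) = Real.sqrt 2 * Real.sqrt (2*π) := by
          rw [← Real.sqrt_mul (by norm_num) (2*π)]
          congr 1; ring
        rw [h4]
        have hne : Real.sqrt (2*π) ≠ 0 := by positivity
        field_simp

/-- The number of reflections before time `t` in the multi-barrier model has finite
expectation, hence is finite almost surely. -/
theorem stmt17 {Ω : Type} [MeasurableSpace Ω] (P : Measure Ω) [IsProbabilityMeasure P]
    (τ : ℕ → Ω → ℝ) (hτm : ∀ n, Measurable (τ n))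
    (u : ℕ → ℝ) (c : ℝ) (hc : 0 < c) (hu : ∀ n : ℕ, c * ((n : ℝ) - 1) ≤ u n)
    (t : ℝ) (ht : 0 < t)
    (hlaw : ∀ n : ℕ, 1 ≤ n →
      (P {ω | τ n ω ≤ t}).toReal = 2 * Phi (-u n / Real.sqrt t))
    (N : Ω → ENNReal)
    (hN : ∀ ω, N ω = ∑' n : ℕ, if τ (n + 1) ω ≤ t then 1 else 0) :
    (∫⁻ ω, N ω ∂P) < ⊤ ∧ ∀ᵐ ω ∂P, N ω < ⊤ := by
  set r : ℝ := Real.exp (-(c^2/(4*t))) with hr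
  have hr1 : r < 1 := by
    have h0 : (0:ℝ) < c^2/(4*t) := by positivity
    exact Real.exp_lt_one_iff.mpr (by linarith)
  have hr0 : 0 ≤ r := (Real.exp_pos _).le
  have hsets : ∀ n : ℕ, MeasurableSet {ω | τ n ω ≤ t} := fun n =>
    hτm n measurableSet_Iic
  have hNeq : N = fun ω => ∑' n : ℕ,
      {ω | τ (n+1) ω ≤ t}.indicator (fun _ => (1:ENNReal)) ω := by
    funext ω
    rw [hN ω]
    exact tsum_congr fun n => by simp [Set.indicator_apply]
  have key : ∫⁻ ω, N ω ∂P = ∑' n : ℕ, P {ω | τ (n+1) ω ≤ t} := by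
    calc ∫⁻ ω, N ω ∂P
        = ∫⁻ ω, ∑' n : ℕ, {ω | τ (n+1) ω ≤ t}.indicator (fun _ => (1:ENNReal)) ω ∂P :=
          lintegral_congr fun ω => congrFun hNeq ω
      _ = ∑' n : ℕ, ∫⁻ ω, {ω | τ (n+1) ω ≤ t}.indicator (fun _ => (1:ENNReal)) ω ∂P :=
          lintegral_tsum fun n => (measurable_one.indicator (hsets (n+1))).aemeasurable
      _ = ∑' n : ℕ, P {ω | τ (n+1) ω ≤ t} :=
          tsum_congr fun n => lintegral_indicator_one (hsets (n+1))
  have hPbound : ∀ n : ℕ, P {ω | τ (n+1) ω ≤ t} ≤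
      ENNReal.ofReal (2 * Real.sqrt 2 * r ^ n) := by
    intro n
    rw [← ENNReal.ofReal_toReal (measure_ne_top P _), hlaw (n+1) (by omega)]
    apply ENNReal.ofReal_le_ofReal
    set a := u (n+1) / Real.sqrt t with ha
    have hst : 0 < Real.sqrt t := Real.sqrt_pos.mpr ht
    have hcn : c * n ≤ u (n+1) := by
      have := hu (n+1); push_cast at this; linarith
    have hcn0 : (0:ℝ) ≤ c * n := by positivity
    have ha0 : 0 ≤ a := div_nonneg (le_trans hcn0 hcn) hst.le
    have h1 : Phi (-u (n+1) / Real.sqrt t) ≤ Real.sqrt 2 * Real.exp (-a^2/4) := by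
      rw [neg_div]; exact Phi_neg_le a ha0
    have h2 : Real.exp (-a^2/4) ≤ r ^ n := by
      rw [hr, ← Real.exp_nat_mul]
      apply Real.exp_le_exp.mpr
      have ha2 : a^2 = (u (n+1))^2 / t := by
        rw [ha, div_pow, Real.sq_sqrt ht.le]
      have hu2 : (c * n)^2 ≤ (u (n+1))^2 := pow_le_pow_left₀ hcn0 hcn 2
      have hnn : (n:ℝ) ≤ (n:ℝ)^2 := by
        rcases Nat.eq_zero_or_pos n with h | h
        · simp [h]
        · have h1 : (1:ℝ) ≤ (n:ℝ) := by exact_mod_cast h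
          nlinarith
      rw [ha2]
      have key2 : c^2 * n ≤ (u (n+1))^2 := by nlinarith [hu2, hnn, sq_nonneg c]
      have h4t : (0:ℝ) < 4 * t := by linarith
      have h2 : c^2 * n / (4*t) ≤ (u (n+1))^2 / (4*t) := by gcongr
      have e1 : -((u (n+1))^2 / t)/4 = -((u (n+1))^2 / (4*t)) := by
        ring
      have e2 : (n:ℝ) * -(c^2/(4*t)) = -(c^2 * n / (4*t)) := by ring
      rw [e1, e2]
      linarith
    calc 2 * Phi (-u (n+1) / Real.sqrt t)
        ≤ 2 * (Real.sqrt 2 * Real.exp (-a^2/4)) := by linarith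
      _ ≤ 2 * (Real.sqrt 2 * r ^ n) := by
          have : (0:ℝ) ≤ Real.sqrt 2 := Real.sqrt_nonneg 2
          nlinarith
      _ = 2 * Real.sqrt 2 * r ^ n := by ring
  have hsum : ∑' n : ℕ, ENNReal.ofReal (2 * Real.sqrt 2 * r ^ n) < ⊤ := by
    have hs : Summable (fun n : ℕ => 2 * Real.sqrt 2 * r ^ n) :=
      (summable_geometric_of_lt_one hr0 hr1).mul_left _
    rw [← ENNReal.ofReal_tsum_of_nonneg (fun n => by positivity) hs]
    exact ENNReal.ofReal_lt_top
  have hfin : ∫⁻ ω, N ω ∂P < ⊤ :=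
    key ▸ lt_of_le_of_lt (ENNReal.tsum_le_tsum hPbound) hsum
  refine ⟨hfin, ?_⟩
  have hNmeas : Measurable N := by
    rw [hNeq]
    exact Measurable.ennreal_tsum fun n => measurable_one.indicator (hsets (n+1))
  exact ae_lt_top hNmeas hfin.ne
end
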